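/- arXiv:2210.15752 — 7 statements merged into one kernel-verified Lean document; each statement's English description precedes it below -/
import Mathlib

section
/- Let X ∈ ℝ^{d_X×T} with XX^⊤ invertible, Y ∈ ℝ^{d_Y×T}, ε > 0, c ≥ 0, and let Ξ = [ε^{1/2}(XX^⊤)^{-1/2}X ; Y] ∈ ℝ^{(d_X+d_Y)×T} be the row-concatenation. Let λ_1 ≥ λ_2 ≥ … ≥ λ_{d_X+d_Y} ≥ 0 be the eigenvalues of ΞΞ^⊤ (equivalently the squared singular values of Ξ), and let v_α ∈ ℝ^T be corresponding orthonormal right singular vectors of Ξ (orthonormal eigenvectors of Ξ^⊤Ξ for the nonzero λ_α). Consider the minimization of tr[(c+ε)Z^⊤Z − Z^⊤Z(εX^⊤(XX^⊤)^{-1}X + Y^⊤Y)] over Z ∈ ℝ^{d×T} subject to the Loewner constraint ZZ^⊤ ≼ I_d. Then for any set of orthonormal vectors {w_α}_{α=1}^{D} ⊂ ℝ^d with D = min(d, d_X+d_Y), the matrix Ẑ = Σ_{α=1}^{D} w_α 𝟙(λ_α > c+ε) v_α^⊤ attains the minimum. -/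
open Matrix Finset

/-!
Write `t = c + ε`. Since `ΞᵀΞ = εXᵀ(XXᵀ)⁻¹X + YᵀY = ∑ λ_β v_β v_βᵀ`, the objective equals
`t·tr(ZZᵀ) − ∑ λ_β ‖Z v_β‖²`. For feasible `Z` the weights `a_β = ‖Z v_β‖²` lie in `[0, 1]` and
`∑ a_β ≤ tr(ZZᵀ) ≤ d`, so the objective is at least `∑ min(t − λ_β, 0) a_β`. These coefficients
increase with `β`, so this linear function of `a` is smallest when the first `min d (dX + dY)`
weights are one and the others zero; that value, `∑_α min(t − λ_α, 0)`, is the objective at `Ẑ`.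
-/

theorem mul_vecMulVec_mul_transpose {m n : Type*} [Fintype m] (Z : Matrix n m ℝ) (x : m → ℝ) :
    Z * vecMulVec x x * Zᵀ = vecMulVec (Z *ᵥ x) (Z *ᵥ x) := by
  rw [mul_vecMulVec, vecMulVec_mul, vecMul_transpose]

section Orthonormal

variable {ι : Type*} [Fintype ι] [DecidableEq ι]

theorem sum_smul_vecMulVec_mul_sum_smul_vecMulVec {l m n : Type*} [Fintype m]
    {mid : ι → m → ℝ} (hmid : ∀ α β, mid α ⬝ᵥ mid β = if α = β then (1 : ℝ) else 0)
    (g : ι → l → ℝ) (f : ι → n → ℝ) (a b : ι → ℝ) :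
    (∑ α, a α • vecMulVec (g α) (mid α)) * (∑ β, b β • vecMulVec (mid β) (f β))
      = ∑ α, (a α * b α) • vecMulVec (g α) (f α) := by
  rw [Matrix.sum_mul]
  refine sum_congr rfl fun α _ => ?_
  rw [Matrix.mul_sum, sum_eq_single α (fun β _ hβ => ?_) (by simp)]
  all_goals rw [Matrix.smul_mul, Matrix.mul_smul, vecMulVec_mul_vecMulVec, vecMulVec_smul, hmid]
  · simp [smul_smul]
  · simp [Ne.symm hβ]

theorem posSemidef_one_sub_sum_smul_vecMulVec {m : Type*} [Fintype m] [DecidableEq m]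
    {w : ι → m → ℝ} (hw : ∀ α β, w α ⬝ᵥ w β = if α = β then (1 : ℝ) else 0)
    {s : ι → ℝ} (hs : ∀ α, s α ≤ 1) :
    (1 - ∑ α, s α • vecMulVec (w α) (w α)).PosSemidef := by
  set P := ∑ α, vecMulVec (w α) (w α)
  have hPP : P * P = P := by
    simpa using sum_smul_vecMulVec_mul_sum_smul_vecMulVec hw w w 1 1
  have hPt : Pᵀ = P := by simp [P, transpose_sum, transpose_vecMulVec]
  have hP : (1 - P).PosSemidef := by
    have h : (1 - P)ᴴ * (1 - P) = 1 - P := by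
      simp only [conjTranspose_eq_transpose_of_trivial, transpose_sub, transpose_one, hPt,
        Matrix.sub_mul, Matrix.mul_sub, Matrix.one_mul, Matrix.mul_one, hPP, sub_self, sub_zero]
    exact h ▸ posSemidef_conjTranspose_mul_self (1 - P)
  have hsplit : 1 - ∑ α, s α • vecMulVec (w α) (w α)
      = (1 - P) + ∑ α, (1 - s α) • vecMulVec (w α) (w α) := by
    simp only [P, sub_smul, one_smul, sum_sub_distrib]
    abel
  rw [hsplit]
  refine hP.add (posSemidef_sum _ fun α _ => ?_)
  simpa using (posSemidef_vecMulVec_self_star (w α)).smul (sub_nonneg.mpr (hs α))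

theorem posSemidef_one_sub_mul_transpose_sum_smul_vecMulVec {m n : Type*} [Fintype m]
    [Fintype n] [DecidableEq m] {w : ι → m → ℝ} {v : ι → n → ℝ}
    (hw : ∀ α β, w α ⬝ᵥ w β = if α = β then (1 : ℝ) else 0)
    (hv : ∀ α β, v α ⬝ᵥ v β = if α = β then (1 : ℝ) else 0)
    {s : ι → ℝ} (hs : ∀ α, s α * s α ≤ 1) :
    (1 - (∑ α, s α • vecMulVec (w α) (v α)) * (∑ α, s α • vecMulVec (w α) (v α))ᵀ).PosSemidef := by
  simpa only [transpose_sum, transpose_smul, transpose_vecMulVec,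
    sum_smul_vecMulVec_mul_sum_smul_vecMulVec hv] using
    posSemidef_one_sub_sum_smul_vecMulVec hw hs

theorem sum_mulVec_dotProduct_mulVec_le_trace {m n : Type*} [Fintype m] [Fintype n]
    [DecidableEq n] {v : ι → n → ℝ} (hv : ∀ α β, v α ⬝ᵥ v β = if α = β then (1 : ℝ) else 0)
    (Z : Matrix m n ℝ) :
    ∑ β, (Z *ᵥ v β) ⬝ᵥ (Z *ᵥ v β) ≤ trace (Z * Zᵀ) := by
  have h := ((posSemidef_one_sub_sum_smul_vecMulVec hv (s := 1) fun _ => le_rfl)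
    |>.mul_mul_conjTranspose_same Z).trace_nonneg
  simpa [Matrix.mul_sub, Matrix.sub_mul, Matrix.mul_sum, Matrix.sum_mul, trace_sum,
    mul_vecMulVec_mul_transpose, sub_nonneg] using h

theorem sum_sqrt_smul_vecMulVec_transpose_mul_self {m n : Type*} [Fintype m]
    {u : ι → m → ℝ} (hu : ∀ α β, u α ⬝ᵥ u β = if α = β then (1 : ℝ) else 0)
    {lam : ι → ℝ} (hlam : ∀ α, 0 ≤ lam α) (v : ι → n → ℝ) :
    (∑ α, √(lam α) • vecMulVec (u α) (v α))ᵀ * ∑ α, √(lam α) • vecMulVec (u α) (v α)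
      = ∑ α, lam α • vecMulVec (v α) (v α) := by
  simp only [transpose_sum, transpose_smul, transpose_vecMulVec,
    sum_smul_vecMulVec_mul_sum_smul_vecMulVec hu, Real.mul_self_sqrt (hlam _)]

theorem sum_smul_vecMulVec_mulVec {n : Type*} [Fintype n] {v : ι → n → ℝ}
    (hv : ∀ α β, v α ⬝ᵥ v β = if α = β then (1 : ℝ) else 0) (lam : ι → ℝ) (β : ι) :
    (∑ α, lam α • vecMulVec (v α) (v α)) *ᵥ v β = lam β • v β := by
  simp [sum_mulVec, smul_mulVec, vecMulVec_mulVec, hv]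

end Orthonormal

section Contraction

variable {m n : Type*} [Fintype m] [Fintype n] [DecidableEq m]

theorem mulVec_dotProduct_mulVec_le_of_posSemidef_one_sub {Z : Matrix m n ℝ}
    (hZ : (1 - Z * Zᵀ).PosSemidef) (x : n → ℝ) :
    (Z *ᵥ x) ⬝ᵥ (Z *ᵥ x) ≤ x ⬝ᵥ x := by
  have hZt : ∀ y, (Zᵀ *ᵥ y) ⬝ᵥ (Zᵀ *ᵥ y) ≤ y ⬝ᵥ y := fun y => by
    have h := hZ.dotProduct_mulVec_nonneg y
    rw [star_trivial, sub_mulVec, one_mulVec, dotProduct_sub, ← mulVec_mulVec,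
      dotProduct_mulVec y Z, ← mulVec_transpose] at h
    linarith
  set y := Z *ᵥ x
  -- `‖y‖⁴ = ⟪x, Zᵀy⟫² ≤ ‖x‖² ‖Zᵀy‖² ≤ ‖x‖² ‖y‖²`
  have hyy : y ⬝ᵥ y = x ⬝ᵥ (Zᵀ *ᵥ y) := by
    change y ⬝ᵥ (Z *ᵥ x) = _
    rw [dotProduct_mulVec, ← mulVec_transpose, dotProduct_comm]
  have hcs : (y ⬝ᵥ y) ^ 2 ≤ (x ⬝ᵥ x) * ((Zᵀ *ᵥ y) ⬝ᵥ (Zᵀ *ᵥ y)) := by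
    rw [hyy]
    simpa only [dotProduct, pow_two] using sum_mul_sq_le_sq_mul_sq univ x (Zᵀ *ᵥ y)
  have hy0 : 0 ≤ y ⬝ᵥ y := by simpa using dotProduct_self_star_nonneg y
  have hx0 : 0 ≤ x ⬝ᵥ x := by simpa using dotProduct_self_star_nonneg x
  nlinarith [hZt y]

theorem trace_mul_transpose_le_card_of_posSemidef_one_sub {Z : Matrix m n ℝ}
    (hZ : (1 - Z * Zᵀ).PosSemidef) : trace (Z * Zᵀ) ≤ Fintype.card m := by
  simpa [trace_sub, sub_nonneg] using hZ.trace_nonneg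

end Contraction

theorem sum_le_sum_mul_of_threshold {ι : Type*} [Fintype ι] [DecidableEq ι] (s : Finset ι)
    {m a : ι → ℝ} {μ : ℝ} (hμ : μ ≤ 0) (hs : ∀ β ∈ s, m β ≤ μ) (hsc : ∀ β ∉ s, μ ≤ m β)
    (ha0 : ∀ β, 0 ≤ a β) (ha1 : ∀ β, a β ≤ 1) (hsum : ∑ β, a β ≤ #s) :
    ∑ β ∈ s, m β ≤ ∑ β, m β * a β := by
  have hsplit : ∑ β, m β * a β - ∑ β ∈ s, m β
      = ∑ β, (m β - μ) * (a β - if β ∈ s then 1 else 0) + μ * (∑ β, a β - #s) := by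
    simp only [mul_sub, sub_mul, mul_ite, mul_one, mul_zero, sum_sub_distrib, sum_ite_mem,
      univ_inter, mul_sum, sum_const, nsmul_eq_mul]
    ring
  have hterm : ∀ β, 0 ≤ (m β - μ) * (a β - if β ∈ s then 1 else 0) := fun β => by
    by_cases hβ : β ∈ s
    · simpa [hβ] using
        mul_nonneg_of_nonpos_of_nonpos (sub_nonpos.2 (hs β hβ)) (sub_nonpos.2 (ha1 β))
    · simpa [hβ] using mul_nonneg (sub_nonneg.2 (hsc β hβ)) (ha0 β)
  have := sum_nonneg fun β (_ : β ∈ univ) => hterm β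
  nlinarith

theorem sum_castLE_min_le_sum_mul {d n : ℕ} {m a : Fin n → ℝ} (hm : Monotone m)
    (hm0 : ∀ β, m β ≤ 0) (ha0 : ∀ β, 0 ≤ a β) (ha1 : ∀ β, a β ≤ 1) (hsum : ∑ β, a β ≤ d) :
    ∑ α : Fin (min d n), m (α.castLE (min_le_right d n)) ≤ ∑ β, m β * a β := by
  set s := univ.map (Fin.castLEEmb (min_le_right d n))
  rw [show ∑ α : Fin (min d n), m (α.castLE _) = ∑ β ∈ s, m β from
    (sum_map univ (Fin.castLEEmb (min_le_right d n)) m).symm]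
  have hmem : ∀ β, β ∈ s ↔ (β : ℕ) < min d n := fun β =>
    ⟨fun h => by obtain ⟨α, -, rfl⟩ := mem_map.1 h; exact α.isLt,
     fun h => mem_map.2 ⟨⟨β, h⟩, mem_univ _, rfl⟩⟩
  have hcard : (#s : ℝ) = min d n := by simp [s]
  rcases le_or_gt n d with hnd | hdn
  · refine sum_le_sum_mul_of_threshold s le_rfl (fun β _ => hm0 β) (fun β hβ => ?_) ha0 ha1 ?_
    · exact absurd ((hmem β).2 (by omega)) hβ
    · rw [hcard, min_eq_right (by exact_mod_cast hnd)]
      simpa using sum_le_sum fun β (_ : β ∈ univ) => ha1 β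
  · refine sum_le_sum_mul_of_threshold s (hm0 ⟨d, hdn⟩) (fun β hβ => hm ?_) (fun β hβ => hm ?_)
      ha0 ha1 ?_
    · have := (hmem β).1 hβ; change (β : ℕ) ≤ d; omega
    · have := (hmem β).not.1 hβ; change d ≤ (β : ℕ); omega
    · rwa [hcard, min_eq_left (by exact_mod_cast hdn.le)]

theorem transpose_fromRows_mul_fromRows {m₁ m₂ n : Type*} [Fintype m₁] [Fintype m₂]
    (A : Matrix m₁ n ℝ) (B : Matrix m₂ n ℝ) :
    (fromRows A B)ᵀ * fromRows A B = Aᵀ * A + Bᵀ * B := by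
  rw [transpose_fromRows, fromCols_mul_fromRows]

theorem whiten_transpose_mul_self {p n : Type*} [Fintype p] [Fintype n] [DecidableEq p]
    {ε : ℝ} (hε : 0 ≤ ε) {X : Matrix p n ℝ} {S : Matrix p p ℝ} (hS : S.IsSymm)
    (hSsq : S * S = X * Xᵀ) :
    (√ε • (S⁻¹ * X))ᵀ * (√ε • (S⁻¹ * X)) = ε • (Xᵀ * (X * Xᵀ)⁻¹ * X) := by
  rw [transpose_smul, Matrix.smul_mul, Matrix.mul_smul, smul_smul, Real.mul_self_sqrt hε,
    transpose_mul, transpose_nonsing_inv, hS.eq, ← hSsq, Matrix.mul_inv_rev]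
  simp only [Matrix.mul_assoc]

def ccpcObjective {m n : Type*} [Fintype m] [Fintype n] (t : ℝ) (M : Matrix n n ℝ)
    (Z : Matrix m n ℝ) : ℝ :=
  trace (t • (Zᵀ * Z) - Zᵀ * Z * M)

theorem ccpcObjective_sum_smul_vecMulVec {ι m n : Type*} [Fintype ι] [Fintype m] [Fintype n]
    [DecidableEq ι] {w : ι → m → ℝ} {v : ι → n → ℝ}
    (hw : ∀ α β, w α ⬝ᵥ w β = if α = β then (1 : ℝ) else 0)
    (hv : ∀ α β, v α ⬝ᵥ v β = if α = β then (1 : ℝ) else 0)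
    {M : Matrix n n ℝ} {lam : ι → ℝ} (hM : ∀ α, M *ᵥ v α = lam α • v α) (s : ι → ℝ) (t : ℝ) :
    ccpcObjective t M (∑ α, s α • vecMulVec (w α) (v α)) = ∑ α, s α * s α * (t - lam α) := by
  simp only [ccpcObjective, transpose_sum, transpose_smul, transpose_vecMulVec,
    sum_smul_vecMulVec_mul_sum_smul_vecMulVec hw, Matrix.sum_mul, Matrix.smul_mul, trace_sub,
    trace_smul, trace_sum, smul_eq_mul, mul_sum, ← sum_sub_distrib]
  refine sum_congr rfl fun α _ => ?_
  rw [trace_vecMulVec, trace_mul_comm, mul_vecMulVec, hM, trace_vecMulVec, smul_dotProduct, hv,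
    if_pos rfl, smul_eq_mul]
  ring

theorem ccpcObjective_sum_smul_vecMulVec_self {ι m n : Type*} [Fintype ι] [Fintype m]
    [Fintype n] (t : ℝ) (lam : ι → ℝ) (v : ι → n → ℝ) (Z : Matrix m n ℝ) :
    ccpcObjective t (∑ β, lam β • vecMulVec (v β) (v β)) Z
      = t * trace (Z * Zᵀ) - ∑ β, lam β * (Z *ᵥ v β) ⬝ᵥ (Z *ᵥ v β) := by
  simp only [ccpcObjective, trace_sub, trace_smul, smul_eq_mul, Matrix.mul_sum, trace_sum,
    Matrix.mul_smul]
  rw [trace_mul_comm Zᵀ]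
  refine congrArg _ (sum_congr rfl fun β _ => ?_)
  rw [Matrix.mul_assoc, trace_mul_comm, Matrix.mul_assoc, ← Matrix.mul_assoc,
    mul_vecMulVec_mul_transpose, trace_vecMulVec]

theorem sum_min_le_ccpcObjective {d n T : ℕ} {lam : Fin n → ℝ} (hlam : Antitone lam)
    {v : Fin n → Fin T → ℝ} (hv : ∀ α β, v α ⬝ᵥ v β = if α = β then (1 : ℝ) else 0)
    {t : ℝ} (ht : 0 ≤ t) {Z : Matrix (Fin d) (Fin T) ℝ} (hZ : (1 - Z * Zᵀ).PosSemidef) :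
    ∑ α : Fin (min d n), min (t - lam (α.castLE (min_le_right d n))) 0
      ≤ ccpcObjective t (∑ β, lam β • vecMulVec (v β) (v β)) Z := by
  set a := fun β => (Z *ᵥ v β) ⬝ᵥ (Z *ᵥ v β)
  have ha0 : ∀ β, 0 ≤ a β := fun β => by simpa using dotProduct_self_star_nonneg (Z *ᵥ v β)
  have ha1 : ∀ β, a β ≤ 1 := fun β => by
    simpa [hv] using mulVec_dotProduct_mulVec_le_of_posSemidef_one_sub hZ (v β)
  have hsum : ∑ β, a β ≤ trace (Z * Zᵀ) := sum_mulVec_dotProduct_mulVec_le_trace hv Z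
  have htr : trace (Z * Zᵀ) ≤ d := by
    simpa using trace_mul_transpose_le_card_of_posSemidef_one_sub hZ
  have hm : Monotone fun β => min (t - lam β) 0 := fun β γ h =>
    min_le_min_right 0 (sub_le_sub_left (hlam h) t)
  calc ∑ α : Fin (min d n), min (t - lam (α.castLE (min_le_right d n))) 0
      ≤ ∑ β, min (t - lam β) 0 * a β :=
        sum_castLE_min_le_sum_mul hm (fun _ => min_le_right _ _) ha0 ha1 (hsum.trans htr)
    _ ≤ ∑ β, (t - lam β) * a β :=
        sum_le_sum fun β _ => mul_le_mul_of_nonneg_right (min_le_left _ _) (ha0 β)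
    _ = t * ∑ β, a β - ∑ β, lam β * a β := by
        simp only [sub_mul, sum_sub_distrib, mul_sum]
    _ ≤ t * trace (Z * Zᵀ) - ∑ β, lam β * a β := by gcongr
    _ = ccpcObjective t (∑ β, lam β • vecMulVec (v β) (v β)) Z :=
        (ccpcObjective_sum_smul_vecMulVec_self t lam v Z).symm

theorem ccpc_thresholded_svd_attains_min_general
    (dX dY d T : ℕ) (X : Matrix (Fin dX) (Fin T) ℝ) (Y : Matrix (Fin dY) (Fin T) ℝ)
    (ε c : ℝ) (hε : 0 < ε) (hc : 0 ≤ c)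
    -- `S` is the positive-semidefinite square root of `XXᵀ`, so `S⁻¹ = (XXᵀ)^{-1/2}`
    (S : Matrix (Fin dX) (Fin dX) ℝ) (hS : S.PosSemidef) (hSsq : S * S = X * Xᵀ)
    -- singular value data of the concatenated whitened matrix `Ξ = [√ε S⁻¹ X ; Y]`
    (lam : Fin (dX + dY) → ℝ)
    (u : Fin (dX + dY) → (Fin dX ⊕ Fin dY) → ℝ)
    (v : Fin (dX + dY) → Fin T → ℝ)
    (hlam_anti : Antitone lam) (hlam_nonneg : ∀ α, 0 ≤ lam α)
    (hu : ∀ α β, u α ⬝ᵥ u β = if α = β then (1 : ℝ) else 0)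
    (hv : ∀ α β, v α ⬝ᵥ v β = if α = β then (1 : ℝ) else 0)
    (hSVD : fromRows (Real.sqrt ε • (S⁻¹ * X)) Y
      = ∑ α : Fin (dX + dY), Real.sqrt (lam α) • vecMulVec (u α) (v α))
    -- an arbitrary orthonormal family `w` of `D = min d (dX + dY)` vectors in `ℝ^d`
    (w : Fin (min d (dX + dY)) → Fin d → ℝ)
    (hw : ∀ α β, w α ⬝ᵥ w β = if α = β then (1 : ℝ) else 0)
    -- the thresholded-SVD candidate `Ẑ`
    (Zhat : Matrix (Fin d) (Fin T) ℝ)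
    (hZhat : Zhat = ∑ α : Fin (min d (dX + dY)),
      (if c + ε < lam (Fin.castLE (min_le_right d (dX + dY)) α) then (1 : ℝ) else 0) •
        vecMulVec (w α) (v (Fin.castLE (min_le_right d (dX + dY)) α))) :
    -- `Ẑ` is feasible and minimizes the objective among all feasible `Z`
    ((1 : Matrix (Fin d) (Fin d) ℝ) - Zhat * Zhatᵀ).PosSemidef ∧
    ∀ Z : Matrix (Fin d) (Fin T) ℝ,
      ((1 : Matrix (Fin d) (Fin d) ℝ) - Z * Zᵀ).PosSemidef →
      Matrix.trace ((c + ε) • (Zhatᵀ * Zhat)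
          - Zhatᵀ * Zhat * (ε • (Xᵀ * (X * Xᵀ)⁻¹ * X) + Yᵀ * Y))
        ≤ Matrix.trace ((c + ε) • (Zᵀ * Z)
          - Zᵀ * Z * (ε • (Xᵀ * (X * Xᵀ)⁻¹ * X) + Yᵀ * Y)) := by
  set κ := Fin.castLE (min_le_right d (dX + dY))
  have hM : ε • (Xᵀ * (X * Xᵀ)⁻¹ * X) + Yᵀ * Y = ∑ β, lam β • vecMulVec (v β) (v β) := by
    rw [← whiten_transpose_mul_self hε.le (isHermitian_iff_isSymm.1 hS.isHermitian) hSsq,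
      ← transpose_fromRows_mul_fromRows, hSVD,
      sum_sqrt_smul_vecMulVec_transpose_mul_self hu hlam_nonneg]
  have hvκ : ∀ α β, v (κ α) ⬝ᵥ v (κ β) = if α = β then (1 : ℝ) else 0 := fun α β => by
    simp [hv, κ, Fin.castLE_inj]
  have hind : ∀ α, (if c + ε < lam (κ α) then (1 : ℝ) else 0)
      * (if c + ε < lam (κ α) then 1 else 0) ≤ 1 := fun α => by split_ifs <;> norm_num
  refine ⟨hZhat ▸ posSemidef_one_sub_mul_transpose_sum_smul_vecMulVec hw hvκ hind,
    fun Z hZ => ?_⟩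
  change ccpcObjective (c + ε) _ Zhat ≤ ccpcObjective (c + ε) _ Z
  rw [hM, hZhat, ccpcObjective_sum_smul_vecMulVec hw hvκ
    (fun α => sum_smul_vecMulVec_mulVec hv lam (κ α))]
  refine le_of_eq_of_le (sum_congr rfl fun α _ => ?_)
    (sum_min_le_ccpcObjective hlam_anti hv (by linarith) hZ)
  split_ifs with h
  · rw [min_eq_left (by linarith)]; ring
  · rw [min_eq_right (by linarith)]; ring

/-- **Thresholded-SVD solution of the covariance-constrained predictive-coding objective.**
Let `X ∈ ℝ^{dX×T}` with `XXᵀ` invertible, `Y ∈ ℝ^{dY×T}`, `ε > 0`, `c ≥ 0`, and let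
`Ξ = [√ε (XXᵀ)^{-1/2} X ; Y]` (row concatenation), with singular value decomposition
`Ξ = ∑ α, √(λ α) • u α (v α)ᵀ` where `u`, `v` are orthonormal families and the `λ α`
(the eigenvalues of `ΞΞᵀ`) are nonincreasing and nonnegative.  Then for any orthonormal
family `w` of `min d (dX + dY)` vectors in `ℝ^d`, the matrix
`Ẑ = ∑ α, 𝟙(λ α > c + ε) • w α (v α)ᵀ` attains the minimum of
`tr[(c+ε) ZᵀZ − ZᵀZ (ε Xᵀ(XXᵀ)⁻¹X + YᵀY)]` over all `Z` with `Z Zᵀ ≼ I` (Loewner order). -/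
theorem ccpc_thresholded_svd_attains_min
    (dX dY d T : ℕ) (X : Matrix (Fin dX) (Fin T) ℝ) (Y : Matrix (Fin dY) (Fin T) ℝ)
    (ε c : ℝ) (hε : 0 < ε) (hc : 0 ≤ c)
    (hX : IsUnit (X * Xᵀ).det)
    -- `S` is the positive-semidefinite square root of `XXᵀ`, so `S⁻¹ = (XXᵀ)^{-1/2}`
    (S : Matrix (Fin dX) (Fin dX) ℝ) (hS : S.PosSemidef) (hSsq : S * S = X * Xᵀ)
    -- singular value data of the concatenated whitened matrix `Ξ = [√ε S⁻¹ X ; Y]`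
    (lam : Fin (dX + dY) → ℝ)
    (u : Fin (dX + dY) → (Fin dX ⊕ Fin dY) → ℝ)
    (v : Fin (dX + dY) → Fin T → ℝ)
    (hlam_anti : Antitone lam) (hlam_nonneg : ∀ α, 0 ≤ lam α)
    (hu : ∀ α β, u α ⬝ᵥ u β = if α = β then (1 : ℝ) else 0)
    (hv : ∀ α β, v α ⬝ᵥ v β = if α = β then (1 : ℝ) else 0)
    (hSVD : fromRows (Real.sqrt ε • (S⁻¹ * X)) Y
      = ∑ α : Fin (dX + dY), Real.sqrt (lam α) • vecMulVec (u α) (v α))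
    -- an arbitrary orthonormal family `w` of `D = min d (dX + dY)` vectors in `ℝ^d`
    (w : Fin (min d (dX + dY)) → Fin d → ℝ)
    (hw : ∀ α β, w α ⬝ᵥ w β = if α = β then (1 : ℝ) else 0)
    -- the thresholded-SVD candidate `Ẑ`
    (Zhat : Matrix (Fin d) (Fin T) ℝ)
    (hZhat : Zhat = ∑ α : Fin (min d (dX + dY)),
      (if c + ε < lam (Fin.castLE (min_le_right d (dX + dY)) α) then (1 : ℝ) else 0) •
        vecMulVec (w α) (v (Fin.castLE (min_le_right d (dX + dY)) α))) :
    -- `Ẑ` is feasible and minimizes the objective among all feasible `Z`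
    ((1 : Matrix (Fin d) (Fin d) ℝ) - Zhat * Zhatᵀ).PosSemidef ∧
    ∀ Z : Matrix (Fin d) (Fin T) ℝ,
      ((1 : Matrix (Fin d) (Fin d) ℝ) - Z * Zᵀ).PosSemidef →
      Matrix.trace ((c + ε) • (Zhatᵀ * Zhat)
          - Zhatᵀ * Zhat * (ε • (Xᵀ * (X * Xᵀ)⁻¹ * X) + Yᵀ * Y))
        ≤ Matrix.trace ((c + ε) • (Zᵀ * Z)
          - Zᵀ * Z * (ε • (Xᵀ * (X * Xᵀ)⁻¹ * X) + Yᵀ * Y)) :=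
  ccpc_thresholded_svd_attains_min_general dX dY d T X Y ε c hε hc S hS hSsq lam u v hlam_anti
    hlam_nonneg hu hv hSVD w hw Zhat hZhat
end

section
/- Let X ∈ ℝ^{d_X×T} and Y ∈ ℝ^{d_Y×T} be whitened, i.e. XX^⊤ = I_{d_X} and YY^⊤ = I_{d_Y}, let ε > 0, c ≥ 0, and set R = XY^⊤ ∈ ℝ^{d_X×d_Y}. Consider the symmetric matrix M = ΞΞ^⊤ where Ξ = [ε^{1/2}X ; Y], i.e. M = [[εI_{d_X}, ε^{1/2}R],[ε^{1/2}R^⊤, I_{d_Y}]]. Then: (i) if ε ≥ 1, the number of eigenvalues of M strictly greater than c+ε is at most rank(R) ≤ min(rank X, rank Y); (ii) if ε < 1, the number of eigenvalues of M strictly greater than c+ε is at most d_Y = rank(Y). -/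
/-!
In an orthonormal eigenbasis the quadratic form of a symmetric matrix `A` reads `∑ λᵢ wᵢ²`, so on the span of the eigenvectors with `λᵢ > t` it strictly exceeds `t ‖v‖²`.
That span therefore meets every subspace on which `vᵀAv ≤ t ‖v‖²` only in `0`, and the number
of eigenvalues above `t` is at most the codimension of such a subspace (a min-max bound).
For `M = [[εI, √ε R], [√ε Rᵀ, I]]` and `v = (x, y)` one has
`vᵀMv = ε ‖x‖² + 2 √ε xᵀRy + ‖y‖²`: on `{Rᵀx = 0}`, of codimension at most `rank R`, this is
`≤ (c + ε) ‖v‖²` once `ε ≥ 1`; on `{y = 0}`, of codimension `d_Y`, it is `≤ (c + ε) ‖v‖²`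
for every `ε`. Whitening gives `rank Y = rank (YYᵀ) = d_Y`.
-/

open Matrix Finset

lemma Matrix.mulVec_dotProduct_mulVec_mulVec {m n R : Type*} [Fintype m] [Fintype n]
    [CommSemiring R]
    (U : Matrix m n R) (B : Matrix m m R) (w : n → R) :
    U *ᵥ w ⬝ᵥ B *ᵥ (U *ᵥ w) = w ⬝ᵥ (Uᵀ * B * U) *ᵥ w := by
  rw [← mulVec_mulVec, ← mulVec_mulVec, dotProduct_transpose_mulVec, dotProduct_comm]

namespace Matrix.IsHermitian

variable {n : Type*} [Fintype n] [DecidableEq n] {A : Matrix n n ℝ} (hA : A.IsHermitian)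

lemma eigenvectorUnitary_mulVec_transpose_mulVec (v : n → ℝ) :
    (hA.eigenvectorUnitary : Matrix n n ℝ) *ᵥ ((hA.eigenvectorUnitary : Matrix n n ℝ)ᵀ *ᵥ v) =
      v := by
  rw [mulVec_mulVec, ← conjTranspose_eq_transpose_of_trivial, ← star_eq_conjTranspose,
    mem_unitaryGroup_iff.mp hA.eigenvectorUnitary.2, one_mulVec]

lemma dotProduct_mulVec_sub_eq_sum (t : ℝ) (v : n → ℝ) :
    v ⬝ᵥ A *ᵥ v - t * (v ⬝ᵥ v) =
      ∑ i, (hA.eigenvalues i - t) * ((hA.eigenvectorUnitary : Matrix n n ℝ)ᵀ *ᵥ v) i ^ 2 := by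
  set U : Matrix n n ℝ := (hA.eigenvectorUnitary : Matrix n n ℝ)
  have hstar : star U = Uᵀ := conjTranspose_eq_transpose_of_trivial U
  have hdiag : Uᵀ * A * U = diagonal hA.eigenvalues := by
    rw [← hstar]
    simpa [Unitary.conjStarAlgAut_star_apply] using hA.conjStarAlgAut_star_eigenvectorUnitary
  have hUU : Uᵀ * U = 1 := hstar ▸ mem_unitaryGroup_iff'.mp hA.eigenvectorUnitary.2
  have hv : v = U *ᵥ (Uᵀ *ᵥ v) := (hA.eigenvectorUnitary_mulVec_transpose_mulVec v).symm
  set w := Uᵀ *ᵥ v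
  have hnorm : v ⬝ᵥ v = w ⬝ᵥ w := by
    rw [hv, dotProduct_mulVec, ← mulVec_transpose, mulVec_mulVec, hUU, one_mulVec]
  rw [hnorm, hv, mulVec_dotProduct_mulVec_mulVec, hdiag]
  simp only [dotProduct, mulVec_diagonal, mul_sum, ← sum_sub_distrib]
  exact sum_congr rfl fun i _ => by ring

lemma card_eigenvalues_gt_add_finrank_le (t : ℝ) (W : Submodule ℝ (n → ℝ))
    (hW : ∀ v ∈ W, v ⬝ᵥ A *ᵥ v ≤ t * (v ⬝ᵥ v)) :
    Nat.card {i // t < hA.eigenvalues i} + Module.finrank ℝ W ≤ Fintype.card n := by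
  set U : Matrix n n ℝ := (hA.eigenvectorUnitary : Matrix n n ℝ)
  -- `ker K` is the span of the eigenvectors with eigenvalue `> t`.
  set K : (n → ℝ) →ₗ[ℝ] ({i // ¬ t < hA.eigenvalues i} → ℝ) :=
    LinearMap.funLeft ℝ ℝ Subtype.val ∘ₗ Uᵀ.mulVecLin
  have hdisj : Disjoint (LinearMap.ker K) W := by
    refine Submodule.disjoint_def.mpr fun v hvK hvW => ?_
    have hlow : ∀ i, ¬ t < hA.eigenvalues i → (Uᵀ *ᵥ v) i = 0 := fun i hi =>
      congrFun (LinearMap.mem_ker.mp hvK) ⟨i, hi⟩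
    have hterm : ∀ i, 0 ≤ (hA.eigenvalues i - t) * (Uᵀ *ᵥ v) i ^ 2 := fun i => by
      by_cases hi : t < hA.eigenvalues i
      · exact mul_nonneg (sub_nonneg.mpr hi.le) (sq_nonneg _)
      · simp [hlow i hi]
    have hsum : ∑ i, (hA.eigenvalues i - t) * (Uᵀ *ᵥ v) i ^ 2 = 0 :=
      le_antisymm (by linarith [hW v hvW, hA.dotProduct_mulVec_sub_eq_sum t v])
        (sum_nonneg fun i _ => hterm i)
    have hw : Uᵀ *ᵥ v = 0 := funext fun i => by
      by_cases hi : t < hA.eigenvalues i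
      · have := (sum_eq_zero_iff_of_nonneg fun i _ => hterm i).mp hsum i (mem_univ i)
        simpa [(sub_pos.mpr hi).ne'] using this
      · exact hlow i hi
    rw [← hA.eigenvectorUnitary_mulVec_transpose_mulVec v, hw, mulVec_zero]
  have hK := LinearMap.finrank_range_add_finrank_ker K
  have hrange : Module.finrank ℝ (LinearMap.range K) ≤
      Fintype.card {i // ¬ t < hA.eigenvalues i} :=
    (Submodule.finrank_le _).trans_eq (Module.finrank_fintype_fun_eq_card ℝ)
  have hdim := Submodule.finrank_add_finrank_le_of_disjoint hdisj
  have hcard := Fintype.card_subtype_le (fun i => t < hA.eigenvalues i)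
  rw [Module.finrank_fintype_fun_eq_card] at hK hdim
  rw [Fintype.card_subtype_compl] at hrange
  rw [Nat.card_eq_fintype_card]
  omega

lemma card_eigenvalues_gt_le_rank {m : Type*} (t : ℝ) (K : Matrix m n ℝ)
    (hK : ∀ v, K *ᵥ v = 0 → v ⬝ᵥ A *ᵥ v ≤ t * (v ⬝ᵥ v)) :
    Nat.card {i // t < hA.eigenvalues i} ≤ K.rank := by
  have hW := hA.card_eigenvalues_gt_add_finrank_le t (LinearMap.ker K.mulVecLin) hK
  have hrank := LinearMap.finrank_range_add_finrank_ker K.mulVecLin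
  rw [Module.finrank_fintype_fun_eq_card] at hrank
  rw [rank]
  omega

end Matrix.IsHermitian

lemma Matrix.sumElim_dotProduct_fromBlocks_mulVec_sumElim {m k R : Type*} [Fintype m] [Fintype k]
    [CommSemiring R]
    (A : Matrix m m R) (B : Matrix m k R) (C : Matrix k m R) (D : Matrix k k R)
    (x : m → R) (y : k → R) :
    Sum.elim x y ⬝ᵥ fromBlocks A B C D *ᵥ Sum.elim x y =
      x ⬝ᵥ A *ᵥ x + x ⬝ᵥ B *ᵥ y + (y ⬝ᵥ C *ᵥ x + y ⬝ᵥ D *ᵥ y) := by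
  rw [fromBlocks_mulVec, Sum.elim_comp_inl, Sum.elim_comp_inr, sumElim_dotProduct_sumElim,
    dotProduct_add, dotProduct_add]

section WhitenedGram

variable {m k : Type*} [Fintype m] [Fintype k] [DecidableEq m] [DecidableEq k]

/-- The Gramian `ΞΞᵀ` of `Ξ = [√ε X ; Y]` for whitened `X`, `Y` with `R = XYᵀ`. -/
noncomputable def whitenedGram (ε : ℝ) (R : Matrix m k ℝ) : Matrix (m ⊕ k) (m ⊕ k) ℝ :=
  fromBlocks (ε • 1) (√ε • R) (√ε • Rᵀ) 1

lemma sumElim_dotProduct_whitenedGram_mulVec_sumElim (ε : ℝ) (R : Matrix m k ℝ)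
    (x : m → ℝ) (y : k → ℝ) :
    Sum.elim x y ⬝ᵥ whitenedGram ε R *ᵥ Sum.elim x y =
      ε * (x ⬝ᵥ x) + 2 * √ε * (x ⬝ᵥ R *ᵥ y) + y ⬝ᵥ y := by
  rw [whitenedGram, sumElim_dotProduct_fromBlocks_mulVec_sumElim]
  simp only [smul_mulVec, one_mulVec, dotProduct_smul, smul_eq_mul, dotProduct_transpose_mulVec]
  ring

lemma card_eigenvalues_whitenedGram_gt_le_rank {ε c : ℝ} (hε : 1 ≤ ε) (hc : 0 ≤ c)
    (R : Matrix m k ℝ) (hM : (whitenedGram ε R).IsHermitian) :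
    Nat.card {i // c + ε < hM.eigenvalues i} ≤ R.rank := by
  refine (hM.card_eigenvalues_gt_le_rank _ (fromCols Rᵀ (0 : Matrix k k ℝ)) fun v hv => ?_).trans
    ?_
  · rw [← Sum.elim_comp_inl_inr v] at hv ⊢
    set x := v ∘ Sum.inl
    set y := v ∘ Sum.inr
    rw [fromCols_mulVec_sumElim, zero_mulVec, add_zero] at hv
    have hxRy : x ⬝ᵥ R *ᵥ y = 0 := by rw [← dotProduct_transpose_mulVec, hv, dotProduct_zero]
    rw [sumElim_dotProduct_whitenedGram_mulVec_sumElim, sumElim_dotProduct_sumElim, hxRy]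
    have hx : 0 ≤ x ⬝ᵥ x := dotProduct_star_self_nonneg x
    have hy : 0 ≤ y ⬝ᵥ y := dotProduct_star_self_nonneg y
    nlinarith
  · calc (fromCols Rᵀ (0 : Matrix k k ℝ)).rank
        = (Rᵀ * fromCols (1 : Matrix m m ℝ) (0 : Matrix m k ℝ)).rank := by
          rw [mul_fromCols, Matrix.mul_one, Matrix.mul_zero]
      _ ≤ R.rank := (rank_mul_le_left _ _).trans_eq (rank_transpose R)

lemma card_eigenvalues_whitenedGram_gt_le_card {ε c : ℝ} (hc : 0 ≤ c)
    (R : Matrix m k ℝ) (hM : (whitenedGram ε R).IsHermitian) :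
    Nat.card {i // c + ε < hM.eigenvalues i} ≤ Fintype.card k := by
  refine (hM.card_eigenvalues_gt_le_rank _ (fromCols (0 : Matrix k m ℝ) 1) fun v hv => ?_).trans
    (rank_le_card_height _)
  rw [← Sum.elim_comp_inl_inr v] at hv ⊢
  set x := v ∘ Sum.inl
  rw [fromCols_mulVec_sumElim, zero_mulVec, zero_add, one_mulVec] at hv
  rw [hv, sumElim_dotProduct_whitenedGram_mulVec_sumElim, sumElim_dotProduct_sumElim]
  simp only [mulVec_zero, dotProduct_zero, mul_zero, add_zero]
  have hx : 0 ≤ x ⬝ᵥ x := dotProduct_star_self_nonneg x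
  nlinarith

end WhitenedGram

theorem ccpc_whitened_rank_bounds_general
    (dX dY T : ℕ) (X : Matrix (Fin dX) (Fin T) ℝ) (Y : Matrix (Fin dY) (Fin T) ℝ)
    (hYw : Y * Yᵀ = 1)
    (ε c : ℝ) (hc : 0 ≤ c)
    (R : Matrix (Fin dX) (Fin dY) ℝ) (hR : R = X * Yᵀ)
    (M : Matrix (Fin dX ⊕ Fin dY) (Fin dX ⊕ Fin dY) ℝ)
    (hM : M = fromBlocks (ε • (1 : Matrix (Fin dX) (Fin dX) ℝ)) (Real.sqrt ε • R)
      (Real.sqrt ε • Rᵀ) (1 : Matrix (Fin dY) (Fin dY) ℝ))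
    (hMh : M.IsHermitian) :
    (1 ≤ ε →
      Nat.card {i : Fin dX ⊕ Fin dY // c + ε < hMh.eigenvalues i} ≤ R.rank ∧
      R.rank ≤ min X.rank Y.rank) ∧
    (ε < 1 →
      Nat.card {i : Fin dX ⊕ Fin dY // c + ε < hMh.eigenvalues i} ≤ dY ∧
      Y.rank = dY) := by
  subst hM
  have hYrank : Y.rank = dY := by
    rw [← rank_self_mul_transpose, hYw, rank_one, Fintype.card_fin]
  have hRrank : R.rank ≤ min X.rank Y.rank := by
    simpa only [hR, rank_transpose] using rank_mul_le X Yᵀ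
  exact ⟨fun hε => ⟨card_eigenvalues_whitenedGram_gt_le_rank hε hc R hMh, hRrank⟩,
    fun _ => ⟨(card_eigenvalues_whitenedGram_gt_le_card hc R hMh).trans_eq (Fintype.card_fin dY),
      hYrank⟩⟩

/-- **Rank bounds for intermediate CCPC layers with whitened adjacent layers.**
For whitened `X` (`XXᵀ = I`) and `Y` (`YYᵀ = I`) with cross-covariance `R = XYᵀ`, and
`M = ΞΞᵀ` for `Ξ = [√ε X ; Y]`, i.e. `M = [[εI, √ε R],[√ε Rᵀ, I]]`:
(i) if `ε ≥ 1`, the number of eigenvalues of `M` strictly greater than `c + ε` is at most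
`rank R`, which is at most `min(rank X, rank Y)`;
(ii) if `ε < 1`, the number of eigenvalues of `M` strictly greater than `c + ε` is at most
`dY = rank Y`. -/
theorem ccpc_whitened_rank_bounds
    (dX dY T : ℕ) (X : Matrix (Fin dX) (Fin T) ℝ) (Y : Matrix (Fin dY) (Fin T) ℝ)
    (hXw : X * Xᵀ = 1) (hYw : Y * Yᵀ = 1)
    (ε c : ℝ) (hε : 0 < ε) (hc : 0 ≤ c)
    (R : Matrix (Fin dX) (Fin dY) ℝ) (hR : R = X * Yᵀ)
    (M : Matrix (Fin dX ⊕ Fin dY) (Fin dX ⊕ Fin dY) ℝ)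
    (hM : M = fromBlocks (ε • (1 : Matrix (Fin dX) (Fin dX) ℝ)) (Real.sqrt ε • R)
      (Real.sqrt ε • Rᵀ) (1 : Matrix (Fin dY) (Fin dY) ℝ))
    (hMh : M.IsHermitian) :
    (1 ≤ ε →
      Nat.card {i : Fin dX ⊕ Fin dY // c + ε < hMh.eigenvalues i} ≤ R.rank ∧
      R.rank ≤ min X.rank Y.rank) ∧
    (ε < 1 →
      Nat.card {i : Fin dX ⊕ Fin dY // c + ε < hMh.eigenvalues i} ≤ dY ∧
      Y.rank = dY) :=
  ccpc_whitened_rank_bounds_general dX dY T X Y hYw ε c hc R hR M hM hMh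
end

section
/- Let X ∈ ℝ^{d_X×T} and Y ∈ ℝ^{d_Y×T} be whitened (XX^⊤ = I_{d_X}, YY^⊤ = I_{d_Y}), let c > 0, and let R = XY^⊤ have simple nonzero singular values ρ_1 > … > ρ_r > 0 with ρ_i² ≠ c for all i, left singular vectors a_i ∈ ℝ^{d_X} and right singular vectors b_i ∈ ℝ^{d_Y}. For ε > 0 let λ_i⁺(ε) = (1+ε+√((1−ε)²+4ερ_i²))/2 be the corresponding eigenvalue of ΞΞ^⊤ for Ξ = [ε^{1/2}X ; Y], and let v_i(ε) ∈ ℝ^T be the associated unit right singular vector of Ξ (sign chosen so that ⟨v_i(ε), X^⊤a_i⟩ ≥ 0). Then as ε → ∞: (i) for each i, λ_i⁺(ε) > c+ε holds for all sufficiently large ε if ρ_i² > c, and fails for all sufficiently large ε if ρ_i² < c; (ii) v_i(ε) → X^⊤a_i, the i-th canonical-correlation score of X with respect to Y. Hence in the limit ε → ∞ the optimal internal representation is driven by the maximally correlated directions between X and Y, retained exactly when the squared canonical correlation exceeds c. -/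
/-!
Put `P = XᵀX` and `Q = YᵀY`; whitening makes both orthogonal projections, `ΞᵀΞ = εP + Q`, and
`PQP = ∑ ρ_j² u_j u_jᵀ` for the orthonormal scores `u_j = Xᵀ a_j`. Write the eigenvalue as
`ε + μ`. Applying `P` and `1 - P` to `(εP + Q) v = (ε + μ) v` gives `PQv = μ Pv` and
`(1 - P) Q v = (ε + μ) (1 - P) v`, so `‖(1 - P) v‖ ≤ 1 / (ε + μ)`, and `Pv` is an approximate
eigenvector of `PQP` for `μ` whose residual `PQ (1 - P) v` is again `O(1 / (ε + μ))`. As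
`μ = λ⁺ - ε → ρ_i²`, which stays away from `0` and from the other `ρ_j²`, all components of `v`
except the one along `u_i` are `O(1 / ε)`, and the sign condition forces `v → u_i`.
Part (i) is only the limit `λ⁺(ε) - ε → ρ_i²`.
-/

open Matrix Finset Filter
open scoped InnerProductSpace RealInnerProductSpace Topology

namespace LinearMap.IsSymmetricProjection

variable {𝕜 E : Type*} [RCLike 𝕜] [NormedAddCommGroup E] [InnerProductSpace 𝕜 E]
  {P : E →ₗ[𝕜] E}

theorem apply_apply (hP : P.IsSymmetricProjection) (x : E) : P (P x) = P x :=
  LinearMap.congr_fun hP.isIdempotentElem.eq x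

theorem inner_apply_sub_apply (hP : P.IsSymmetricProjection) (x : E) :
    ⟪P x, x - P x⟫_𝕜 = 0 := by
  rw [inner_sub_right, ← hP.isSymmetric, hP.apply_apply, sub_self]

theorem norm_sq_eq_add (hP : P.IsSymmetricProjection) (x : E) :
    ‖x‖ ^ 2 = ‖P x‖ ^ 2 + ‖x - P x‖ ^ 2 := by
  simpa [sq] using norm_add_sq_eq_norm_sq_add_norm_sq_of_inner_eq_zero _ _
    (hP.inner_apply_sub_apply x)

theorem norm_apply_le (hP : P.IsSymmetricProjection) (x : E) : ‖P x‖ ≤ ‖x‖ :=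
  sq_le_sq₀ (norm_nonneg _) (norm_nonneg _) |>.mp <| by
    linarith [hP.norm_sq_eq_add x, sq_nonneg ‖x - P x‖]

theorem norm_sub_apply_le (hP : P.IsSymmetricProjection) (x : E) : ‖x - P x‖ ≤ ‖x‖ :=
  sq_le_sq₀ (norm_nonneg _) (norm_nonneg _) |>.mp <| by
    linarith [hP.norm_sq_eq_add x, sq_nonneg ‖P x‖]

end LinearMap.IsSymmetricProjection

/-- `∑ (μ - σ)⁻²` over the eigenvalues `σ ≠ s i` of `x ↦ ∑ j, s j ⟪u j, x⟫ u j` for an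
orthonormal family `u`; its kernel contributes `σ = 0`, the term `(μ ^ 2)⁻¹`. -/
noncomputable def invGapSq {ι : Type*} [Fintype ι] [DecidableEq ι] (s : ι → ℝ) (i : ι)
    (μ : ℝ) : ℝ :=
  (μ ^ 2)⁻¹ + ∑ j ∈ univ.erase i, ((μ - s j) ^ 2)⁻¹

theorem tendsto_invGapSq {ι α : Type*} [Fintype ι] [DecidableEq ι] {s : ι → ℝ} {i : ι}
    (hsi : s i ≠ 0) (hs : ∀ j ≠ i, s j ≠ s i) {l : Filter α} {μ : α → ℝ}
    (hμ : Tendsto μ l (𝓝 (s i))) :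
    Tendsto (fun a => invGapSq s i (μ a)) l (𝓝 (invGapSq s i (s i))) :=
  ((hμ.pow 2).inv₀ (pow_ne_zero 2 hsi)).add <| tendsto_finsetSum _ fun j hj =>
    ((hμ.sub_const (s j)).pow 2).inv₀ <|
      pow_ne_zero 2 <| sub_ne_zero.mpr (hs j (ne_of_mem_erase hj)).symm

namespace Orthonormal

variable {E ι : Type*} [NormedAddCommGroup E] [InnerProductSpace ℝ E] [Fintype ι] {u : ι → E}

theorem norm_sq_eq_norm_sub_sum_sq_add (hu : Orthonormal ℝ u) (x : E) :
    ‖x‖ ^ 2 = ‖x - ∑ j, ⟪u j, x⟫ • u j‖ ^ 2 + ∑ j, ⟪u j, x⟫ ^ 2 := by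
  have hw : ‖∑ j, ⟪u j, x⟫ • u j‖ ^ 2 = ∑ j, ⟪u j, x⟫ ^ 2 := by
    rw [← real_inner_self_eq_norm_sq, hu.inner_sum]
    simp [sq]
  have hxw : ⟪x, ∑ j, ⟪u j, x⟫ • u j⟫ = ∑ j, ⟪u j, x⟫ ^ 2 := by
    simp [inner_sum, real_inner_smul_right, real_inner_comm, sq]
  rw [norm_sub_sq_real, hw, hxw]
  ring

theorem norm_sq_sub_inner_sq_le [DecidableEq ι] (hu : Orthonormal ℝ u) {s : ι → ℝ} {μ : ℝ}
    {i : ι} (hμ : μ ≠ 0) (hμs : ∀ j ≠ i, μ ≠ s j) (p : E) :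
    ‖p‖ ^ 2 - ⟪u i, p⟫ ^ 2 ≤ ‖μ • p - ∑ j, (s j * ⟪u j, p⟫) • u j‖ ^ 2 * invGapSq s i μ := by
  set e := μ • p - ∑ j, (s j * ⟪u j, p⟫) • u j
  set q := p - ∑ j, ⟪u j, p⟫ • u j
  have hcoef : ∀ k, ⟪u k, e⟫ = (μ - s k) * ⟪u k, p⟫ := fun k => by
    simp only [e, inner_sub_right, real_inner_smul_right, hu.inner_right_fintype]
    ring
  have hq : μ • q = e - ∑ j, ⟪u j, e⟫ • u j := by
    simp only [q, e, hcoef, sub_mul, sub_smul, sum_sub_distrib, smul_sub, smul_sum, smul_smul]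
    abel
  have hq_le : μ ^ 2 * ‖q‖ ^ 2 ≤ ‖e‖ ^ 2 := by
    have := hu.norm_sq_eq_norm_sub_sum_sq_add e
    rw [← hq, norm_smul, mul_pow, Real.norm_eq_abs, sq_abs] at this
    linarith [sum_nonneg fun j (_ : j ∈ univ) => sq_nonneg ⟪u j, e⟫]
  have hcoef_le : ∀ j ≠ i, ⟪u j, p⟫ ^ 2 ≤ ‖e‖ ^ 2 * ((μ - s j) ^ 2)⁻¹ := fun j hj => by
    have hue : ⟪u j, e⟫ ^ 2 ≤ ‖e‖ ^ 2 := by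
      have := abs_real_inner_le_norm (u j) e
      rw [hu.1 j, one_mul] at this
      exact sq_le_sq' (abs_le.mp this).1 (abs_le.mp this).2
    rw [hcoef, mul_pow] at hue
    rw [le_mul_inv_iff₀ (sq_pos_of_ne_zero (sub_ne_zero.mpr (hμs j hj)))]
    linarith
  have hp := hu.norm_sq_eq_norm_sub_sum_sq_add p
  have hsplit := add_sum_erase univ (fun j => ⟪u j, p⟫ ^ 2) (mem_univ i)
  calc ‖p‖ ^ 2 - ⟪u i, p⟫ ^ 2 = ‖q‖ ^ 2 + ∑ j ∈ univ.erase i, ⟪u j, p⟫ ^ 2 := by linarith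
    _ ≤ ‖e‖ ^ 2 * (μ ^ 2)⁻¹ + ∑ j ∈ univ.erase i, ‖e‖ ^ 2 * ((μ - s j) ^ 2)⁻¹ := by
      gcongr with j hj
      · rw [le_mul_inv_iff₀ (sq_pos_of_ne_zero hμ)]
        linarith
      · exact hcoef_le j (ne_of_mem_erase hj)
    _ = ‖e‖ ^ 2 * invGapSq s i μ := by rw [invGapSq, mul_add, mul_sum]

end Orthonormal

theorem norm_sub_sq_le_two_mul_one_sub_inner_sq {E : Type*} [NormedAddCommGroup E]
    [InnerProductSpace ℝ E] {u v : E} (hu : ‖u‖ = 1) (hv : ‖v‖ = 1) (hvu : 0 ≤ ⟪v, u⟫) :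
    ‖v - u‖ ^ 2 ≤ 2 * (1 - ⟪v, u⟫ ^ 2) := by
  have hle : ⟪v, u⟫ ≤ 1 := by simpa [hu, hv] using real_inner_le_norm v u
  rw [norm_sub_sq_real, hu, hv]
  nlinarith

section ProjectionPencil

variable {E ι : Type*} [NormedAddCommGroup E] [InnerProductSpace ℝ E] {P Q : E →ₗ[ℝ] E}

theorem apply_apply_eq_smul_of_eigen (hP : P.IsSymmetricProjection) {ε μ : ℝ} {v : E}
    (hv : ε • P v + Q v = (ε + μ) • v) : P (Q v) = μ • P v := by
  have h := congrArg P hv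
  rw [map_add, map_smul, map_smul, hP.apply_apply, add_smul] at h
  exact add_left_cancel h

theorem abs_mul_norm_sub_apply_le_of_eigen (hP : P.IsSymmetricProjection)
    (hQ : Q.IsSymmetricProjection) {ε μ : ℝ} {v : E} (hv : ε • P v + Q v = (ε + μ) • v) :
    |ε + μ| * ‖v - P v‖ ≤ ‖v‖ :=
  calc |ε + μ| * ‖v - P v‖ = ‖(ε + μ) • (v - P v)‖ := by rw [norm_smul, Real.norm_eq_abs]
    _ = ‖Q v - P (Q v)‖ := by
      rw [smul_sub, ← hv, apply_apply_eq_smul_of_eigen hP hv, add_smul]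
      abel_nf
    _ ≤ ‖Q v‖ := hP.norm_sub_apply_le _
    _ ≤ ‖v‖ := hQ.norm_apply_le _

variable [Fintype ι] [DecidableEq ι] {u : ι → E} {s : ι → ℝ} {i : ι}

theorem sq_mul_norm_sub_sq_le_of_eigen (hP : P.IsSymmetricProjection)
    (hQ : Q.IsSymmetricProjection) (hu : Orthonormal ℝ u) (hPu : ∀ j, P (u j) = u j)
    (hPQP : ∀ x, P (Q (P x)) = ∑ j, (s j * ⟪u j, x⟫) • u j) {ε μ : ℝ} (hμ : μ ≠ 0)
    (hμs : ∀ j ≠ i, μ ≠ s j) {v : E} (hv : ε • P v + Q v = (ε + μ) • v) (hv1 : ‖v‖ = 1)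
    (hvu : 0 ≤ ⟪v, u i⟫) :
    (ε + μ) ^ 2 * ‖v - u i‖ ^ 2 ≤ 2 * (1 + invGapSq s i μ) := by
  set z := v - P v
  have hz : (ε + μ) ^ 2 * ‖z‖ ^ 2 ≤ 1 := by
    have := abs_mul_norm_sub_apply_le_of_eigen hP hQ hv
    rw [hv1] at this
    rw [← sq_abs, ← mul_pow]
    exact pow_le_one₀ (by positivity) this
  have hresidual : μ • P v - ∑ j, (s j * ⟪u j, P v⟫) • u j = P (Q z) := by
    rw [← hPQP, hP.apply_apply, map_sub, map_sub, apply_apply_eq_smul_of_eigen hP hv]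
  have hresidual_le : ‖P (Q z)‖ ^ 2 ≤ ‖z‖ ^ 2 := by
    gcongr
    exact (hP.norm_apply_le _).trans (hQ.norm_apply_le _)
  have hnear := hu.norm_sq_sub_inner_sq_le hμ hμs (P v)
  have hinner : ⟪u i, P v⟫ = ⟪v, u i⟫ := by rw [← hP.isSymmetric, hPu, real_inner_comm]
  rw [hresidual, hinner] at hnear
  have hpyth := hP.norm_sq_eq_add v
  rw [hv1] at hpyth
  have hG : 0 ≤ invGapSq s i μ := by unfold invGapSq; positivity
  have hdefect : 1 - ⟪v, u i⟫ ^ 2 ≤ ‖z‖ ^ 2 * (1 + invGapSq s i μ) := by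
    linarith [mul_le_mul_of_nonneg_right hresidual_le hG]
  calc (ε + μ) ^ 2 * ‖v - u i‖ ^ 2
      ≤ (ε + μ) ^ 2 * (2 * (‖z‖ ^ 2 * (1 + invGapSq s i μ))) := by
        gcongr
        exact (norm_sub_sq_le_two_mul_one_sub_inner_sq (hu.1 i) hv1 hvu).trans (by linarith)
    _ = 2 * ((ε + μ) ^ 2 * ‖z‖ ^ 2) * (1 + invGapSq s i μ) := by ring
    _ ≤ 2 * 1 * (1 + invGapSq s i μ) := by gcongr
    _ = 2 * (1 + invGapSq s i μ) := by ring

theorem tendsto_of_eigen (hP : P.IsSymmetricProjection) (hQ : Q.IsSymmetricProjection)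
    (hu : Orthonormal ℝ u) (hPu : ∀ j, P (u j) = u j)
    (hPQP : ∀ x, P (Q (P x)) = ∑ j, (s j * ⟪u j, x⟫) • u j) (hsi : s i ≠ 0)
    (hs : ∀ j ≠ i, s j ≠ s i) {μ : ℝ → ℝ} (hμ : Tendsto μ atTop (𝓝 (s i))) {v : ℝ → E}
    (hv : ∀ᶠ ε in atTop,
      ε • P (v ε) + Q (v ε) = (ε + μ ε) • v ε ∧ ‖v ε‖ = 1 ∧ 0 ≤ ⟪v ε, u i⟫) :
    Tendsto v atTop (𝓝 (u i)) := by
  have hlam : Tendsto (fun ε => ε + μ ε) atTop atTop := tendsto_id.atTop_add hμ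
  have hbound : Tendsto (fun ε => 2 * (1 + invGapSq s i (μ ε)) / (ε + μ ε) ^ 2) atTop (𝓝 0) :=
    (tendsto_const_nhds.mul (tendsto_const_nhds.add (tendsto_invGapSq hsi hs hμ))).div_atTop
      ((tendsto_pow_atTop two_ne_zero).comp hlam)
  have hgap : ∀ᶠ ε in atTop, ∀ j, j ≠ i → μ ε ≠ s j := eventually_all.2 fun j => by
    by_cases hj : j = i
    · exact .of_forall fun _ hj' => (hj' hj).elim
    · exact (hμ.eventually_ne (hs j hj).symm).mono fun _ h _ => h
  have hsq : Tendsto (fun ε => ‖v ε - u i‖ ^ 2) atTop (𝓝 0) := by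
    refine squeeze_zero' (.of_forall fun _ => sq_nonneg _) ?_ hbound
    filter_upwards [hv, hgap, hμ.eventually_ne hsi, hlam.eventually_gt_atTop 0]
      with ε ⟨hvε, hv1, hvu⟩ hgapε hμε hlamε
    rw [le_div_iff₀ (by positivity), mul_comm]
    exact sq_mul_norm_sub_sq_le_of_eigen hP hQ hu hPu hPQP hμε hgapε hvε hv1 hvu
  rw [tendsto_iff_norm_sub_tendsto_zero]
  simpa using hsq.sqrt

end ProjectionPencil

/-- The larger eigenvalue of `!![ε, √ε * ρ; √ε * ρ, 1]`, the block of `ΞΞᵀ` on the pair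
`(a i, 0), (0, b i)`. -/
noncomputable def lambdaPlus (ρ ε : ℝ) : ℝ := (1 + ε + √((1 - ε) ^ 2 + 4 * ε * ρ ^ 2)) / 2

theorem tendsto_lambdaPlus_sub_self (ρ : ℝ) :
    Tendsto (fun ε => lambdaPlus ρ ε - ε) atTop (𝓝 (ρ ^ 2)) := by
  -- rationalising, `lambdaPlus ρ ε - ε = g ε⁻¹` with `g` continuous at `0` and `g 0 = ρ ^ 2`
  set g : ℝ → ℝ := fun t => 2 * ρ ^ 2 / (1 - t + √((1 - t) ^ 2 + 4 * ρ ^ 2 * t))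
  have hg : Tendsto g (𝓝 0) (𝓝 (ρ ^ 2)) := by
    have : ContinuousAt g 0 := by fun_prop (disch := norm_num)
    convert this.tendsto using 2
    norm_num [g]
  refine (hg.comp tendsto_inv_atTop_zero).congr' ?_
  filter_upwards [eventually_gt_atTop 1] with ε hε
  have hε0 : 0 < ε := by linarith
  set s := √((1 - ε) ^ 2 + 4 * ε * ρ ^ 2)
  have hs2 : s ^ 2 = (1 - ε) ^ 2 + 4 * ε * ρ ^ 2 := Real.sq_sqrt (by positivity)
  have hroot : √((1 - ε⁻¹) ^ 2 + 4 * ρ ^ 2 * ε⁻¹) = s / ε := by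
    rw [show (1 - ε⁻¹) ^ 2 + 4 * ρ ^ 2 * ε⁻¹ = ((1 - ε) ^ 2 + 4 * ε * ρ ^ 2) / ε ^ 2 by
      field_simp; ring, Real.sqrt_div' _ (by positivity), Real.sqrt_sq hε0.le]
  have hden : 0 < 1 - ε⁻¹ + s / ε := by
    have := inv_lt_one_of_one_lt₀ hε
    positivity
  show 2 * ρ ^ 2 / (1 - ε⁻¹ + √((1 - ε⁻¹) ^ 2 + 4 * ρ ^ 2 * ε⁻¹)) = (1 + ε + s) / 2 - ε
  rw [hroot, div_eq_iff hden.ne']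
  field_simp
  linear_combination -hs2

namespace Matrix

variable {m n p ι : Type*}

theorem isSymmetricProjection_toEuclideanLin_transpose_mul_self [Fintype m] [DecidableEq m]
    [Fintype n] [DecidableEq n] {X : Matrix m n ℝ} (hX : X * Xᵀ = 1) :
    (toEuclideanLin (Xᵀ * X)).IsSymmetricProjection where
  isIdempotentElem := by
    change toEuclideanLin (Xᵀ * X) ∘ₗ toEuclideanLin (Xᵀ * X) = _
    rw [← toLpLin_mul_same, Matrix.mul_assoc, ← Matrix.mul_assoc X, hX, Matrix.one_mul]
  isSymmetric := isSymmetric_toEuclideanLin_iff.mpr <| by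
    simpa [conjTranspose_eq_transpose_of_trivial] using isHermitian_conjTranspose_mul_self X

theorem orthonormal_toLp_transpose_mulVec [Fintype m] [DecidableEq m] [Fintype n]
    [DecidableEq ι] {X : Matrix m n ℝ} (hX : X * Xᵀ = 1) {a : ι → m → ℝ}
    (ha : ∀ i j, a i ⬝ᵥ a j = if i = j then 1 else 0) :
    Orthonormal ℝ fun j => WithLp.toLp 2 (Xᵀ *ᵥ a j) := by
  refine orthonormal_iff_ite.2 fun j k => ?_
  rw [EuclideanSpace.inner_toLp_toLp, star_trivial, dotProduct_mulVec, vecMul_transpose,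
    mulVec_mulVec, hX, one_mulVec, dotProduct_comm, ha]

theorem transpose_mul_self_mulVec_transpose_mulVec {R : Type*} [CommSemiring R] [Fintype m]
    [DecidableEq m] [Fintype n] {X : Matrix m n R} (hX : X * Xᵀ = 1) (x : m → R) :
    (Xᵀ * X) *ᵥ (Xᵀ *ᵥ x) = Xᵀ *ᵥ x := by
  rw [mulVec_mulVec, Matrix.mul_assoc, hX, Matrix.mul_one]

theorem sum_smul_vecMulVec_mul_transpose {R : Type*} [CommSemiring R] [Fintype p] [Fintype ι]
    [DecidableEq ι] {a : ι → m → R} {b : ι → p → R} (ρ : ι → R)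
    (hb : ∀ i j, b i ⬝ᵥ b j = if i = j then 1 else 0) :
    (∑ i, ρ i • vecMulVec (a i) (b i)) * (∑ i, ρ i • vecMulVec (a i) (b i))ᵀ
      = ∑ i, ρ i ^ 2 • vecMulVec (a i) (a i) := by
  rw [transpose_sum, Matrix.sum_mul]
  simp_rw [Matrix.mul_sum]
  simp [transpose_vecMulVec, vecMulVec_mul_vecMulVec, hb, apply_ite, smul_smul, sq]

theorem gram_sandwich_eq_sum_vecMulVec {R : Type*} [CommSemiring R] [Fintype m] [DecidableEq m]
    [Fintype n] [Fintype p] [Fintype ι] [DecidableEq ι] {X : Matrix m n R} {Y : Matrix p n R}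
    {ρ : ι → R} {a : ι → m → R} {b : ι → p → R} (hb : ∀ i j, b i ⬝ᵥ b j = if i = j then 1 else 0)
    (hR : X * Yᵀ = ∑ i, ρ i • vecMulVec (a i) (b i)) :
    Xᵀ * X * (Yᵀ * Y) * (Xᵀ * X) = ∑ j, ρ j ^ 2 • vecMulVec (Xᵀ *ᵥ a j) (Xᵀ *ᵥ a j) := by
  have : Xᵀ * X * (Yᵀ * Y) * (Xᵀ * X) = Xᵀ * ((X * Yᵀ) * (X * Yᵀ)ᵀ) * X := by
    simp only [transpose_mul, transpose_transpose, Matrix.mul_assoc]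
  rw [this, hR, sum_smul_vecMulVec_mul_transpose ρ hb, Matrix.mul_sum, Matrix.sum_mul]
  simp [mul_vecMulVec, vecMulVec_mul, mulVec_transpose]

theorem toEuclideanLin_sum_smul_vecMulVec_self [Fintype n] [DecidableEq n] [Fintype ι]
    (s : ι → ℝ) (w : ι → n → ℝ) (x : EuclideanSpace ℝ n) :
    toEuclideanLin (∑ j, s j • vecMulVec (w j) (w j)) x
      = ∑ j, (s j * ⟪WithLp.toLp 2 (w j), x⟫) • WithLp.toLp 2 (w j) := by
  simp [toLpLin_apply, vecMulVec_mulVec, EuclideanSpace.inner_eq_star_dotProduct,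
    dotProduct_comm, smul_smul, ← WithLp.toLp_sum]

theorem transpose_fromRows_mul_fromRows_sqrt_smul [Fintype m] [Fintype p] (X : Matrix m n ℝ)
    (Y : Matrix p n ℝ) {ε : ℝ} (hε : 0 ≤ ε) :
    (fromRows (√ε • X) Y)ᵀ * fromRows (√ε • X) Y = ε • (Xᵀ * X) + Yᵀ * Y := by
  rw [transpose_fromRows, fromCols_mul_fromRows, transpose_smul, Matrix.smul_mul,
    Matrix.mul_smul, smul_smul, Real.mul_self_sqrt hε]

theorem tendsto_of_eigen_whitened [Fintype m] [DecidableEq m] [Fintype n] [DecidableEq n]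
    [Fintype p] [DecidableEq p] [Fintype ι] [DecidableEq ι] {X : Matrix m n ℝ} {Y : Matrix p n ℝ}
    (hX : X * Xᵀ = 1) (hY : Y * Yᵀ = 1) {ρ : ι → ℝ} (hρpos : ∀ j, 0 < ρ j)
    (hρinj : Function.Injective ρ) {a : ι → m → ℝ} {b : ι → p → ℝ}
    (ha : ∀ i j, a i ⬝ᵥ a j = if i = j then 1 else 0)
    (hb : ∀ i j, b i ⬝ᵥ b j = if i = j then 1 else 0)
    (hR : X * Yᵀ = ∑ i, ρ i • vecMulVec (a i) (b i)) {i : ι} {μ : ℝ → ℝ}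
    (hμ : Tendsto μ atTop (𝓝 (ρ i ^ 2))) {v : ℝ → n → ℝ}
    (hv : ∀ᶠ ε in atTop, (ε • (Xᵀ * X) + Yᵀ * Y) *ᵥ v ε = (ε + μ ε) • v ε ∧
      v ε ⬝ᵥ v ε = 1 ∧ 0 ≤ v ε ⬝ᵥ (Xᵀ *ᵥ a i)) :
    Tendsto v atTop (𝓝 (Xᵀ *ᵥ a i)) := by
  have hPQP (x : EuclideanSpace ℝ n) : toEuclideanLin (Xᵀ * X) (toEuclideanLin (Yᵀ * Y)
      (toEuclideanLin (Xᵀ * X) x)) = ∑ j, (ρ j ^ 2 * ⟪WithLp.toLp 2 (Xᵀ *ᵥ a j), x⟫) •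
        WithLp.toLp 2 (Xᵀ *ᵥ a j) := by
    rw [← toEuclideanLin_sum_smul_vecMulVec_self, ← gram_sandwich_eq_sum_vecMulVec hb hR]
    simp only [toLpLin_mul_same, LinearMap.coe_comp, Function.comp_apply]
  have hs : ∀ j ≠ i, ρ j ^ 2 ≠ ρ i ^ 2 := fun j hj h =>
    hj (hρinj ((pow_left_inj₀ (hρpos j).le (hρpos i).le two_ne_zero).1 h))
  have hlim := tendsto_of_eigen
    (isSymmetricProjection_toEuclideanLin_transpose_mul_self hX)
    (isSymmetricProjection_toEuclideanLin_transpose_mul_self hY)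
    (orthonormal_toLp_transpose_mulVec hX ha)
    (fun j => congrArg (WithLp.toLp 2) (transpose_mul_self_mulVec_transpose_mulVec hX (a j)))
    hPQP (pow_ne_zero 2 (hρpos i).ne') hs hμ (v := fun ε => WithLp.toLp 2 (v ε)) <| by
      filter_upwards [hv] with ε ⟨heig, hnorm, hsign⟩
      refine ⟨?_, ?_, ?_⟩
      · simpa [toLpLin_apply, add_mulVec, smul_mulVec] using congrArg (WithLp.toLp 2) heig
      · rw [norm_eq_sqrt_real_inner, EuclideanSpace.inner_toLp_toLp, star_trivial, hnorm,
          Real.sqrt_one]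
      · rwa [EuclideanSpace.inner_toLp_toLp, star_trivial, dotProduct_comm]
  exact ((PiLp.continuous_ofLp 2 _).tendsto _).comp hlim

end Matrix

theorem ccpc_limit_eps_to_infty_cca_general
    (dX dY T : ℕ) (X : Matrix (Fin dX) (Fin T) ℝ) (Y : Matrix (Fin dY) (Fin T) ℝ)
    (hXw : X * Xᵀ = 1) (hYw : Y * Yᵀ = 1)
    (c : ℝ)
    -- SVD of the cross-covariance `R = XYᵀ`: simple nonzero singular values `ρ_i`
    (r : ℕ) (ρ : Fin r → ℝ) (hρpos : ∀ i, 0 < ρ i) (hρanti : StrictAnti ρ)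
    (a : Fin r → Fin dX → ℝ) (b : Fin r → Fin dY → ℝ)
    (ha : ∀ i j, a i ⬝ᵥ a j = if i = j then (1 : ℝ) else 0)
    (hb : ∀ i j, b i ⬝ᵥ b j = if i = j then (1 : ℝ) else 0)
    (hR : X * Yᵀ = ∑ i : Fin r, ρ i • vecMulVec (a i) (b i))
    -- the eigenvalue branch `λ_i⁺(ε)` of `ΞΞᵀ`
    (lamPlus : Fin r → ℝ → ℝ)
    (hlamPlus : ∀ i ε, lamPlus i ε = (1 + ε + Real.sqrt ((1 - ε) ^ 2 + 4 * ε * ρ i ^ 2)) / 2)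
    -- `v i ε` is a unit right singular vector of `Ξ(ε) = [√ε X ; Y]` for `λ_i⁺(ε)`,
    -- with sign chosen so that `⟨v_i(ε), Xᵀ a_i⟩ ≥ 0`
    (v : Fin r → ℝ → Fin T → ℝ)
    (hv : ∀ i ε, 0 < ε →
      ((fromRows (Real.sqrt ε • X) Y)ᵀ * fromRows (Real.sqrt ε • X) Y) *ᵥ v i ε
          = lamPlus i ε • v i ε ∧
      v i ε ⬝ᵥ v i ε = 1 ∧
      0 ≤ v i ε ⬝ᵥ (Xᵀ *ᵥ a i)) :
    (∀ i : Fin r,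
      (c < ρ i ^ 2 → ∀ᶠ ε in atTop, c + ε < lamPlus i ε) ∧
      (ρ i ^ 2 < c → ∀ᶠ ε in atTop, ¬ c + ε < lamPlus i ε)) ∧
    (∀ i : Fin r, Tendsto (v i) atTop (nhds (Xᵀ *ᵥ a i))) := by
  have hμ (i : Fin r) : Tendsto (fun ε => lamPlus i ε - ε) atTop (𝓝 (ρ i ^ 2)) := by
    simp only [hlamPlus]
    exact tendsto_lambdaPlus_sub_self (ρ i)
  refine ⟨fun i => ⟨fun h => ?_, fun h => ?_⟩, fun i => ?_⟩
  · filter_upwards [(hμ i).eventually_const_lt h] with ε hε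
    linarith
  · filter_upwards [(hμ i).eventually_lt_const h] with ε hε
    linarith
  · refine Matrix.tendsto_of_eigen_whitened hXw hYw hρpos hρanti.injective ha hb hR (hμ i) ?_
    filter_upwards [eventually_gt_atTop 0] with ε hε
    rw [add_sub_cancel, ← Matrix.transpose_fromRows_mul_fromRows_sqrt_smul X Y hε.le]
    exact hv i ε hε

/-- **The ε → ∞ limit of the CCPC solution is given by CCA directions.**
Let `X`, `Y` be whitened (`XXᵀ = I`, `YYᵀ = I`), `c > 0`, and let `R = XYᵀ` have simple
nonzero singular values `ρ_1 > … > ρ_r > 0` with `ρ_i² ≠ c`, left singular vectors `a_i`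
and right singular vectors `b_i`.  For `ε > 0` let
`λ_i⁺(ε) = (1+ε+√((1−ε)²+4ερ_i²))/2` and let `v_i(ε)` be an associated unit right singular
vector of `Ξ = [√ε X ; Y]` with sign chosen so that `⟨v_i(ε), Xᵀ a_i⟩ ≥ 0`.  Then, as
`ε → ∞`: (i) `λ_i⁺(ε) > c + ε` holds eventually if `ρ_i² > c` and fails eventually if
`ρ_i² < c`; (ii) `v_i(ε) → Xᵀ a_i`, the `i`-th canonical-correlation score of `X`. -/
theorem ccpc_limit_eps_to_infty_cca
    (dX dY T : ℕ) (X : Matrix (Fin dX) (Fin T) ℝ) (Y : Matrix (Fin dY) (Fin T) ℝ)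
    (hXw : X * Xᵀ = 1) (hYw : Y * Yᵀ = 1)
    (c : ℝ) (hc : 0 < c)
    -- SVD of the cross-covariance `R = XYᵀ`: simple nonzero singular values `ρ_i`
    (r : ℕ) (ρ : Fin r → ℝ) (hρpos : ∀ i, 0 < ρ i) (hρanti : StrictAnti ρ)
    (hρc : ∀ i, ρ i ^ 2 ≠ c)
    (a : Fin r → Fin dX → ℝ) (b : Fin r → Fin dY → ℝ)
    (ha : ∀ i j, a i ⬝ᵥ a j = if i = j then (1 : ℝ) else 0)
    (hb : ∀ i j, b i ⬝ᵥ b j = if i = j then (1 : ℝ) else 0)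
    (hR : X * Yᵀ = ∑ i : Fin r, ρ i • vecMulVec (a i) (b i))
    -- the eigenvalue branch `λ_i⁺(ε)` of `ΞΞᵀ`
    (lamPlus : Fin r → ℝ → ℝ)
    (hlamPlus : ∀ i ε, lamPlus i ε = (1 + ε + Real.sqrt ((1 - ε) ^ 2 + 4 * ε * ρ i ^ 2)) / 2)
    -- `v i ε` is a unit right singular vector of `Ξ(ε) = [√ε X ; Y]` for `λ_i⁺(ε)`,
    -- with sign chosen so that `⟨v_i(ε), Xᵀ a_i⟩ ≥ 0`
    (v : Fin r → ℝ → Fin T → ℝ)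
    (hv : ∀ i ε, 0 < ε →
      ((fromRows (Real.sqrt ε • X) Y)ᵀ * fromRows (Real.sqrt ε • X) Y) *ᵥ v i ε
          = lamPlus i ε • v i ε ∧
      v i ε ⬝ᵥ v i ε = 1 ∧
      0 ≤ v i ε ⬝ᵥ (Xᵀ *ᵥ a i)) :
    (∀ i : Fin r,
      (c < ρ i ^ 2 → ∀ᶠ ε in atTop, c + ε < lamPlus i ε) ∧
      (ρ i ^ 2 < c → ∀ᶠ ε in atTop, ¬ c + ε < lamPlus i ε)) ∧
    (∀ i : Fin r, Tendsto (v i) atTop (nhds (Xᵀ *ᵥ a i))) :=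
  ccpc_limit_eps_to_infty_cca_general dX dY T X Y hXw hYw c r ρ hρpos hρanti a b ha hb hR lamPlus
    hlamPlus v hv
end

section
/- Let X ∈ ℝ^{d_X×T} with XX^⊤ invertible, Y ∈ ℝ^{d_Y×T}, Z ∈ ℝ^{d×T}, and ε, c, T > 0. Then min over W_b ∈ ℝ^{d×d_X} of ε‖Z − W_bX‖_F² plus min over W_a ∈ ℝ^{d_Y×d} of (T·tr[W_a^⊤W_a] − 2·tr[Y^⊤W_aZ]) plus c‖Z‖_F² equals tr[(c+ε)Z^⊤Z − Z^⊤Z(εX^⊤(XX^⊤)^{-1}X + (1/T)Y^⊤Y)]. -/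
/-!
Both minimisations are completed squares for the Frobenius inner product `⟪A, B⟫ = tr (Aᵀ B)`.
The basal one is least squares: `Z - W X` splits orthogonally into the residual `Z (1 - P)`,
where `P = Xᵀ (X Xᵀ)⁻¹ X` is the symmetric idempotent projection onto the row space of `X`, and
a multiple of `X`, so the minimum `tr (Zᵀ Z (1 - P))` is attained at `W = Z Xᵀ (X Xᵀ)⁻¹`.
The apical one is `T ‖W - T⁻¹ Y Zᵀ‖² - T⁻¹ ‖Y Zᵀ‖²`, with minimum `-T⁻¹ tr (Zᵀ Z Yᵀ Y)`.
-/

open Matrix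

/-- Squared Frobenius norm `‖M‖_F² = tr (Mᵀ M)`. -/
noncomputable def frobSq {m n : ℕ} (M : Matrix (Fin m) (Fin n) ℝ) : ℝ :=
  Matrix.trace (Mᵀ * M)

theorem isLeast_setOf_exists_eq {α : Type*} {f : α → ℝ} {a : α} {b : ℝ} (ha : f a = b)
    (hb : ∀ w, b ≤ f w) : IsLeast {r | ∃ w, r = f w} b :=
  ⟨⟨a, ha.symm⟩, by rintro _ ⟨w, rfl⟩; exact hb w⟩

namespace Matrix

variable {k l m n : Type*} [Fintype m] [Fintype n]

theorem trace_transpose_mul_self_nonneg (A : Matrix m n ℝ) : 0 ≤ trace (Aᵀ * A) := by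
  simpa only [conjTranspose_eq_transpose_of_trivial] using
    (posSemidef_conjTranspose_mul_self A).trace_nonneg

theorem trace_transpose_mul_comm (A B : Matrix m n ℝ) : trace (Aᵀ * B) = trace (Bᵀ * A) := by
  rw [← trace_transpose, transpose_mul, transpose_transpose]

theorem trace_transpose_mul_self_sub (A B : Matrix m n ℝ) :
    trace ((A - B)ᵀ * (A - B)) = trace (Aᵀ * A) - 2 * trace (Aᵀ * B) + trace (Bᵀ * B) := by
  rw [transpose_sub, Matrix.sub_mul, Matrix.mul_sub, Matrix.mul_sub, trace_sub, trace_sub,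
    trace_sub, trace_transpose_mul_comm B A]
  ring

theorem trace_complete_square {t : ℝ} (ht : t ≠ 0) (W B : Matrix m n ℝ) :
    t * trace (Wᵀ * W) - 2 * trace (Wᵀ * B)
      = t * trace ((W - t⁻¹ • B)ᵀ * (W - t⁻¹ • B)) - t⁻¹ * trace (Bᵀ * B) := by
  simp only [trace_transpose_mul_self_sub, transpose_smul, Matrix.smul_mul, Matrix.mul_smul,
    trace_smul, smul_eq_mul]
  field_simp
  ring

theorem isLeast_trace_quadratic [Fintype k] [Fintype l] {t : ℝ} (ht : 0 < t)
    (Y : Matrix l n ℝ) (Z : Matrix k n ℝ) :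
    IsLeast {r | ∃ W : Matrix l k ℝ, r = t * trace (Wᵀ * W) - 2 * trace (Yᵀ * W * Z)}
      (-(t⁻¹ * trace (Zᵀ * Z * (Yᵀ * Y)))) := by
  have hlin (W : Matrix l k ℝ) : trace (Yᵀ * W * Z) = trace (Wᵀ * (Y * Zᵀ)) := by
    rw [trace_mul_cycle, ← trace_transpose (Wᵀ * (Y * Zᵀ))]
    simp only [transpose_mul, transpose_transpose, Matrix.mul_assoc]
  have hquad : trace ((Y * Zᵀ)ᵀ * (Y * Zᵀ)) = trace (Zᵀ * Z * (Yᵀ * Y)) := by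
    rw [transpose_mul, transpose_transpose, ← Matrix.mul_assoc, trace_mul_comm]
    simp only [Matrix.mul_assoc]
  have hsq (W : Matrix l k ℝ) : t * trace (Wᵀ * W) - 2 * trace (Yᵀ * W * Z)
      = t * trace ((W - t⁻¹ • (Y * Zᵀ))ᵀ * (W - t⁻¹ • (Y * Zᵀ)))
        - t⁻¹ * trace (Zᵀ * Z * (Yᵀ * Y)) := by
    rw [hlin, trace_complete_square ht.ne', hquad]
  refine isLeast_setOf_exists_eq (a := t⁻¹ • (Y * Zᵀ)) ?_ fun W => ?_
  · simp only [hsq, sub_self, Matrix.mul_zero, trace_zero, mul_zero, zero_sub]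
  · rw [hsq]
    linarith [mul_nonneg ht.le (trace_transpose_mul_self_nonneg (W - t⁻¹ • (Y * Zᵀ)))]

variable [DecidableEq m]

noncomputable def rowSpaceProj (X : Matrix m n ℝ) : Matrix n n ℝ :=
  Xᵀ * (X * Xᵀ)⁻¹ * X

theorem transpose_rowSpaceProj (X : Matrix m n ℝ) : (rowSpaceProj X)ᵀ = rowSpaceProj X := by
  simp only [rowSpaceProj, transpose_mul, transpose_nonsing_inv, transpose_transpose,
    Matrix.mul_assoc]

theorem rowSpaceProj_mul_transpose {X : Matrix m n ℝ} (hX : IsUnit (X * Xᵀ).det) :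
    rowSpaceProj X * Xᵀ = Xᵀ := by
  rw [rowSpaceProj, Matrix.mul_assoc, Matrix.mul_assoc, nonsing_inv_mul _ hX, Matrix.mul_one]

theorem rowSpaceProj_mul_self {X : Matrix m n ℝ} (hX : IsUnit (X * Xᵀ).det) :
    rowSpaceProj X * rowSpaceProj X = rowSpaceProj X := by
  nth_rw 2 [rowSpaceProj]
  rw [← Matrix.mul_assoc, ← Matrix.mul_assoc, rowSpaceProj_mul_transpose hX, rowSpaceProj]

noncomputable def leastSquaresCoeff (X : Matrix m n ℝ) (Z : Matrix k n ℝ) : Matrix k m ℝ :=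
  Z * Xᵀ * (X * Xᵀ)⁻¹

theorem leastSquaresCoeff_mul (X : Matrix m n ℝ) (Z : Matrix k n ℝ) :
    leastSquaresCoeff X Z * X = Z * rowSpaceProj X := by
  simp only [leastSquaresCoeff, rowSpaceProj, Matrix.mul_assoc]

theorem sub_leastSquaresCoeff_mul_mul_transpose {X : Matrix m n ℝ} (hX : IsUnit (X * Xᵀ).det)
    (Z : Matrix k n ℝ) : (Z - leastSquaresCoeff X Z * X) * Xᵀ = 0 := by
  rw [Matrix.sub_mul, leastSquaresCoeff_mul, Matrix.mul_assoc, rowSpaceProj_mul_transpose hX,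
    sub_self]

variable [DecidableEq n]

theorem sub_leastSquaresCoeff_mul (X : Matrix m n ℝ) (Z : Matrix k n ℝ) :
    Z - leastSquaresCoeff X Z * X = Z * (1 - rowSpaceProj X) := by
  rw [leastSquaresCoeff_mul, Matrix.mul_sub, Matrix.mul_one]

theorem trace_sub_leastSquaresCoeff_mul_sq [Fintype k] {X : Matrix m n ℝ}
    (hX : IsUnit (X * Xᵀ).det) (Z : Matrix k n ℝ) :
    trace ((Z - leastSquaresCoeff X Z * X)ᵀ * (Z - leastSquaresCoeff X Z * X))
      = trace (Zᵀ * Z * (1 - rowSpaceProj X)) := by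
  have hsymm : (1 - rowSpaceProj X)ᵀ = 1 - rowSpaceProj X := by
    rw [transpose_sub, transpose_one, transpose_rowSpaceProj]
  have hidem : (1 - rowSpaceProj X) * (1 - rowSpaceProj X) = 1 - rowSpaceProj X := by
    rw [Matrix.sub_mul, Matrix.mul_sub, Matrix.mul_sub, rowSpaceProj_mul_self hX]
    simp only [Matrix.one_mul, Matrix.mul_one, sub_self, sub_zero]
  rw [sub_leastSquaresCoeff_mul, transpose_mul, hsymm, Matrix.mul_assoc, trace_mul_comm,
    Matrix.mul_assoc, Matrix.mul_assoc, hidem, ← Matrix.mul_assoc]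

theorem trace_sub_leastSquaresCoeff_mul_sq_le [Fintype k] {X : Matrix m n ℝ}
    (hX : IsUnit (X * Xᵀ).det) (Z : Matrix k n ℝ) (W : Matrix k m ℝ) :
    trace (Zᵀ * Z * (1 - rowSpaceProj X)) ≤ trace ((Z - W * X)ᵀ * (Z - W * X)) := by
  set R := Z - leastSquaresCoeff X Z * X
  set V := (W - leastSquaresCoeff X Z) * X
  have hsplit : Z - W * X = R - V := by
    simp only [R, V, Matrix.sub_mul]
    abel
  have horth : trace (Rᵀ * V) = 0 := by
    rw [← Matrix.mul_assoc, trace_mul_cycle, ← transpose_transpose X, ← transpose_mul,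
      transpose_transpose, sub_leastSquaresCoeff_mul_mul_transpose hX, transpose_zero,
      Matrix.zero_mul, trace_zero]
  rw [hsplit, trace_transpose_mul_self_sub, horth, trace_sub_leastSquaresCoeff_mul_sq hX]
  linarith [trace_transpose_mul_self_nonneg V]

end Matrix

theorem ccpc_per_layer_reduction_general
    (dX dY d T : ℕ) (hT : 0 < T)
    (X : Matrix (Fin dX) (Fin T) ℝ) (Y : Matrix (Fin dY) (Fin T) ℝ)
    (Z : Matrix (Fin d) (Fin T) ℝ)
    (ε c : ℝ) (hε : 0 < ε)
    (hX : IsUnit (X * Xᵀ).det) :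
    ∃ m₁ m₂ : ℝ,
      IsLeast { r : ℝ | ∃ Wb : Matrix (Fin d) (Fin dX) ℝ,
          r = ε * frobSq (Z - Wb * X) } m₁ ∧
      IsLeast { r : ℝ | ∃ Wa : Matrix (Fin dY) (Fin d) ℝ,
          r = (T : ℝ) * Matrix.trace (Waᵀ * Wa) - 2 * Matrix.trace (Yᵀ * Wa * Z) } m₂ ∧
      m₁ + m₂ + c * frobSq Z
        = Matrix.trace ((c + ε) • (Zᵀ * Z)
            - Zᵀ * Z * (ε • (Xᵀ * (X * Xᵀ)⁻¹ * X) + ((T : ℝ))⁻¹ • (Yᵀ * Y))) := by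
  refine ⟨ε * trace (Zᵀ * Z * (1 - rowSpaceProj X)), -((T : ℝ)⁻¹ * trace (Zᵀ * Z * (Yᵀ * Y))),
    isLeast_setOf_exists_eq (a := leastSquaresCoeff X Z) ?_ fun Wb => ?_,
    isLeast_trace_quadratic (by exact_mod_cast hT) Y Z, ?_⟩
  · rw [frobSq, trace_sub_leastSquaresCoeff_mul_sq hX]
  · exact mul_le_mul_of_nonneg_left (trace_sub_leastSquaresCoeff_mul_sq_le hX Z Wb) hε.le
  · simp only [frobSq, rowSpaceProj, Matrix.mul_sub, Matrix.mul_add, Matrix.mul_one,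
      Matrix.mul_smul, trace_sub, trace_add, trace_smul, smul_eq_mul]
    ring

/-- **Reduction of the per-layer CCPC loss to a trace objective in `Z` alone.**
For `X` with `XXᵀ` invertible, `Y`, `Z`, and `ε, c, T > 0`:
`min_{W_b} ε‖Z − W_bX‖_F² + min_{W_a} (T·tr[W_aᵀW_a] − 2·tr[YᵀW_aZ]) + c‖Z‖_F²`
`  = tr[(c+ε)ZᵀZ − ZᵀZ(εXᵀ(XXᵀ)⁻¹X + (1/T)YᵀY)]`. -/
theorem ccpc_per_layer_reduction
    (dX dY d T : ℕ) (hT : 0 < T)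
    (X : Matrix (Fin dX) (Fin T) ℝ) (Y : Matrix (Fin dY) (Fin T) ℝ)
    (Z : Matrix (Fin d) (Fin T) ℝ)
    (ε c : ℝ) (hε : 0 < ε) (hc : 0 < c)
    (hX : IsUnit (X * Xᵀ).det) :
    ∃ m₁ m₂ : ℝ,
      IsLeast { r : ℝ | ∃ Wb : Matrix (Fin d) (Fin dX) ℝ,
          r = ε * frobSq (Z - Wb * X) } m₁ ∧
      IsLeast { r : ℝ | ∃ Wa : Matrix (Fin dY) (Fin d) ℝ,
          r = (T : ℝ) * Matrix.trace (Waᵀ * Wa) - 2 * Matrix.trace (Yᵀ * Wa * Z) } m₂ ∧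
      m₁ + m₂ + c * frobSq Z
        = Matrix.trace ((c + ε) • (Zᵀ * Z)
            - Zᵀ * Z * (ε • (Xᵀ * (X * Xᵀ)⁻¹ * X) + ((T : ℝ))⁻¹ • (Yᵀ * Y))) :=
  ccpc_per_layer_reduction_general dX dY d T hT X Y Z ε c hε hX
end

section
/- Consider an (n+1)-layer linear network with fixed matrices W_b^{(l)} ∈ ℝ^{d_{l+1}×d_l}, W_a^{(l)} ∈ ℝ^{d_{l+1}×d_l}, Q^{(l)} ∈ ℝ^{k_l×d_l}, conductances g_b, g_a > 0 with ε = g_a/g_b, input z^{(0)} ∈ ℝ^{d_0}, output z^{(n)} = y ∈ ℝ^{d_n}, and suppose z^{(1)}, …, z^{(n-1)} satisfy the equilibrium equations g_b W_b^{(l-1)}z^{(l-1)} + g_a W_a^{(l)⊤}z^{(l+1)} − g_b z^{(l)} − g_a Q^{(l)⊤}Q^{(l)}z^{(l)} = 0 for l = 1, …, n−1. Define F^{(l)} = (I + εQ^{(l)⊤}Q^{(l)})^{-1}, B_1 = F^{(n-1)}, A_1 = I, and recursively A_{k+1} = W_a^{(n-k-1)⊤}B_kA_k and B_{k+1} = (I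 − εF^{(n-k-1)}W_a^{(n-k-1)⊤}B_kW_b^{(n-k-1)})^{-1}F^{(n-k-1)}, assuming all indicated inverses exist. Then for every k = 1, …, n−1: z^{(n-k)} = B_k(W_b^{(n-k-1)}z^{(n-k-1)} + ε^k A_k W_a^{(n-1)⊤}y). -/
open Matrix

/-!
Dividing the equilibrium equation of layer `l` by `g_b` gives
`(I + ε Qᵀ Q) z⁽ˡ⁾ = W_b z⁽ˡ⁻¹⁾ + ε W_aᵀ z⁽ˡ⁺¹⁾`,
i.e. `z⁽ˡ⁾ = F⁽ˡ⁾ (W_b z⁽ˡ⁻¹⁾ + ε W_aᵀ z⁽ˡ⁺¹⁾)`. At the top hidden layer this is already the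
claim. Below it, substituting the claim for `z⁽ˡ⁺¹⁾` (backward substitution) moves the term
`ε F W_aᵀ B_{l+1} W_b z⁽ˡ⁾` to the left, and inverting `I − ε F W_aᵀ B_{l+1} W_b` yields the
claim for `z⁽ˡ⁾`.
-/

section BackwardSubstitution

variable {K R m n p : Type*} [Field K] [CommRing R] [Fintype m] [Fintype n]

theorem Matrix.eq_inv_mulVec_of_mulVec_eq [DecidableEq n] {N : Matrix n n R} {x w : n → R}
    (hN : IsUnit N.det) (h : N *ᵥ x = w) : x = N⁻¹ *ᵥ w := by
  rw [← h, mulVec_mulVec, nonsing_inv_mul _ hN, one_mulVec]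

theorem one_add_smul_mulVec_eq_of_conductance_balance [DecidableEq n] {gb ga ε : K}
    (hgb : gb ≠ 0) (hε : ε = ga / gb) {M : Matrix n n K} {u v x : n → K}
    (h : gb • u + ga • v - gb • x - ga • (M *ᵥ x) = 0) :
    (1 + ε • M) *ᵥ x = u + ε • v := by
  have hga : ga = ε * gb := by rw [hε, div_mul_cancel₀ _ hgb]
  subst hga
  have hscaled : gb • (u + ε • v - x - ε • (M *ᵥ x)) = 0 := by
    rw [← h]
    module
  have hdiv : u + ε • v - x - ε • (M *ᵥ x) = 0 := (smul_eq_zero.mp hscaled).resolve_left hgb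
  rw [add_mulVec, one_mulVec, smul_mulVec]
  linear_combination (norm := module) -hdiv

theorem eq_inv_mul_mulVec_of_backward_substitution [DecidableEq m] [Fintype p] {ε : R} (j : ℕ)
    {F : Matrix m m R} {Wa Wb : Matrix n m R} {B : Matrix n n R} {A : Matrix n p R}
    {u x : m → R} {x' : n → R} {y : p → R}
    (hunit : IsUnit (1 - ε • (F * Waᵀ * B * Wb)).det)
    (hx : x = F *ᵥ (u + ε • (Waᵀ *ᵥ x')))
    (hx' : x' = B *ᵥ (Wb *ᵥ x + ε ^ j • (A *ᵥ y))) :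
    x = ((1 - ε • (F * Waᵀ * B * Wb))⁻¹ * F) *ᵥ
      (u + ε ^ (j + 1) • ((Waᵀ * B * A) *ᵥ y)) := by
  rw [← mulVec_mulVec]
  refine eq_inv_mulVec_of_mulVec_eq hunit ?_
  rw [sub_mulVec, one_mulVec, smul_mulVec]
  nth_rewrite 1 [hx]
  rw [hx']
  simp only [mulVec_add, mulVec_smul, mulVec_mulVec, Matrix.mul_assoc, pow_succ]
  module

end BackwardSubstitution

theorem bioccpc_equilibrium_recursion_general
    (m : ℕ) (d kk : ℕ → ℕ)
    (Wb Wa : (l : ℕ) → Matrix (Fin (d (l + 1))) (Fin (d l)) ℝ)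
    (Q : (l : ℕ) → Matrix (Fin (kk l)) (Fin (d l)) ℝ)
    (ga gb ε : ℝ) (hgb : 0 < gb) (hε : ε = ga / gb)
    (z : (l : ℕ) → Fin (d l) → ℝ)
    -- equilibrium of the neural dynamics at every hidden layer `l + 1 ∈ {1, …, m}`
    (hequil : ∀ l, l < m →
      gb • (Wb l *ᵥ z l) + ga • ((Wa (l + 1))ᵀ *ᵥ z (l + 2))
        - gb • z (l + 1) - ga • ((Q (l + 1))ᵀ *ᵥ (Q (l + 1) *ᵥ z (l + 1))) = 0)
    -- `F^{(l)} = (I + ε Q^{(l)ᵀ}Q^{(l)})⁻¹`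
    (F : (l : ℕ) → Matrix (Fin (d l)) (Fin (d l)) ℝ)
    (hF : ∀ l, F l = (1 + ε • ((Q l)ᵀ * Q l))⁻¹)
    -- `B` and `A`, indexed by layer (`B_l` and `A_l` correspond to `B_k`, `A_k` with `k = n - l`)
    (B : (l : ℕ) → Matrix (Fin (d l)) (Fin (d l)) ℝ)
    (A : (l : ℕ) → Matrix (Fin (d l)) (Fin (d m)) ℝ)
    (hBtop : B m = F m) (hAtop : A m = 1)
    (hArec : ∀ l, 1 ≤ l → l < m → A l = (Wa l)ᵀ * B (l + 1) * A (l + 1))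
    (hBrec : ∀ l, 1 ≤ l → l < m →
      B l = (1 - ε • (F l * (Wa l)ᵀ * B (l + 1) * Wb l))⁻¹ * F l)
    -- all indicated inverses exist
    (hFinv : ∀ l, 1 ≤ l → l ≤ m → IsUnit (1 + ε • ((Q l)ᵀ * Q l)).det)
    (hBinv : ∀ l, 1 ≤ l → l < m →
      IsUnit (1 - ε • (F l * (Wa l)ᵀ * B (l + 1) * Wb l)).det) :
    ∀ l, l < m →
      z (l + 1) = B (l + 1) *ᵥ
        (Wb l *ᵥ z l + ε ^ (m - l) • (A (l + 1) *ᵥ ((Wa m)ᵀ *ᵥ z (m + 1)))) := by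
  have hsolve : ∀ l, l < m →
      z (l + 1) = F (l + 1) *ᵥ (Wb l *ᵥ z l + ε • ((Wa (l + 1))ᵀ *ᵥ z (l + 2))) := by
    intro l hl
    rw [hF]
    refine eq_inv_mulVec_of_mulVec_eq (hFinv (l + 1) (by omega) hl) ?_
    refine one_add_smul_mulVec_eq_of_conductance_balance hgb.ne' hε ?_
    simpa only [mulVec_mulVec] using hequil l hl
  have hdepth : ∀ k l, l + 1 + k = m → z (l + 1) = B (l + 1) *ᵥ
      (Wb l *ᵥ z l + ε ^ (k + 1) • (A (l + 1) *ᵥ ((Wa m)ᵀ *ᵥ z (m + 1)))) := by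
    intro k
    induction k with
    | zero =>
      intro l hlm
      obtain rfl : m = l + 1 := by omega
      simpa only [hBtop, hAtop, one_mulVec, zero_add, pow_one] using hsolve l (by omega)
    | succ k ih =>
      intro l hlm
      rw [hBrec (l + 1) (by omega) (by omega), hArec (l + 1) (by omega) (by omega)]
      exact eq_inv_mul_mulVec_of_backward_substitution (k + 1)
        (hBinv (l + 1) (by omega) (by omega)) (hsolve l (by omega)) (ih (l + 1) (by omega))
  intro l hl
  rw [show m - l = m - l - 1 + 1 by omega]
  exact hdepth (m - l - 1) l (by omega)

/-- **Equilibrium solution of the BioCCPC neural dynamics.**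
Consider an `(n+1)`-layer linear network (`n = m + 1`) with fixed weights
`W_b^{(l)}, W_a^{(l)} ∈ ℝ^{d_{l+1}×d_l}`, interneuron weights `Q^{(l)} ∈ ℝ^{k_l×d_l}`,
conductances `g_b, g_a > 0` with `ε = g_a/g_b`, input `z^{(0)}`, output `z^{(n)} = y`, and
hidden activities satisfying the equilibrium equations
`g_b W_b^{(l-1)}z^{(l-1)} + g_a W_a^{(l)ᵀ}z^{(l+1)} − g_b z^{(l)} − g_a Q^{(l)ᵀ}Q^{(l)}z^{(l)} = 0`.
With `F^{(l)} = (I + εQ^{(l)ᵀ}Q^{(l)})⁻¹` and the recursively defined matrices `B`, `A`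
(indexed here by layer: `B_{n-1} = F^{(n-1)}`, `A_{n-1} = I`,
`A_l = W_a^{(l)ᵀ}B_{l+1}A_{l+1}`, `B_l = (I − εF^{(l)}W_a^{(l)ᵀ}B_{l+1}W_b^{(l)})⁻¹F^{(l)}`),
assuming all indicated inverses exist, every hidden layer satisfies
`z^{(l)} = B_l (W_b^{(l-1)}z^{(l-1)} + ε^{n-l} A_l W_a^{(n-1)ᵀ} y)`. -/
theorem bioccpc_equilibrium_recursion
    (m : ℕ) (hm : 1 ≤ m) (d kk : ℕ → ℕ)
    (Wb Wa : (l : ℕ) → Matrix (Fin (d (l + 1))) (Fin (d l)) ℝ)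
    (Q : (l : ℕ) → Matrix (Fin (kk l)) (Fin (d l)) ℝ)
    (ga gb ε : ℝ) (hga : 0 < ga) (hgb : 0 < gb) (hε : ε = ga / gb)
    (z : (l : ℕ) → Fin (d l) → ℝ)
    -- equilibrium of the neural dynamics at every hidden layer `l + 1 ∈ {1, …, m}`
    (hequil : ∀ l, l < m →
      gb • (Wb l *ᵥ z l) + ga • ((Wa (l + 1))ᵀ *ᵥ z (l + 2))
        - gb • z (l + 1) - ga • ((Q (l + 1))ᵀ *ᵥ (Q (l + 1) *ᵥ z (l + 1))) = 0)
    -- `F^{(l)} = (I + ε Q^{(l)ᵀ}Q^{(l)})⁻¹`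
    (F : (l : ℕ) → Matrix (Fin (d l)) (Fin (d l)) ℝ)
    (hF : ∀ l, F l = (1 + ε • ((Q l)ᵀ * Q l))⁻¹)
    -- `B` and `A`, indexed by layer (`B_l` and `A_l` correspond to `B_k`, `A_k` with `k = n - l`)
    (B : (l : ℕ) → Matrix (Fin (d l)) (Fin (d l)) ℝ)
    (A : (l : ℕ) → Matrix (Fin (d l)) (Fin (d m)) ℝ)
    (hBtop : B m = F m) (hAtop : A m = 1)
    (hArec : ∀ l, 1 ≤ l → l < m → A l = (Wa l)ᵀ * B (l + 1) * A (l + 1))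
    (hBrec : ∀ l, 1 ≤ l → l < m →
      B l = (1 - ε • (F l * (Wa l)ᵀ * B (l + 1) * Wb l))⁻¹ * F l)
    -- all indicated inverses exist
    (hFinv : ∀ l, 1 ≤ l → l ≤ m → IsUnit (1 + ε • ((Q l)ᵀ * Q l)).det)
    (hBinv : ∀ l, 1 ≤ l → l < m →
      IsUnit (1 - ε • (F l * (Wa l)ᵀ * B (l + 1) * Wb l)).det) :
    ∀ l, l < m →
      z (l + 1) = B (l + 1) *ᵥ
        (Wb l *ᵥ z l + ε ^ (m - l) • (A (l + 1) *ᵥ ((Wa m)ᵀ *ᵥ z (m + 1)))) :=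
  bioccpc_equilibrium_recursion_general m d kk Wb Wa Q ga gb ε hgb hε z hequil F hF B A hBtop hAtop
    hArec hBrec hFinv hBinv
end

section
/- In the setting of the equilibrium recursion z^{(n-k)} = B_k(W_b^{(n-k-1)}z^{(n-k-1)} + ε^k A_k W_a^{(n-1)⊤}y) with fixed (ε-independent) matrices W_a^{(l)}, W_b^{(l)}, Q^{(l)}, the equilibrium solution z^{(l)}(ε) is well-defined and analytic in ε on a neighborhood of ε = 0, and there exist matrix-valued polynomials C_1^{(l)}(ε) and C_2^{(l)}(ε) in ε of degree at most n−l−1, independent of y (namely the degree-(n−l−1) Taylor truncations of B_{n-l}W_b^{(l-1)} and of B_{n-l-1}W_b^{(l)}B_{n-l}W_b^{(l-1)} respectively), such that as ε → 0⁺: z^{(l)}(ε) = C_1^{(l)}(ε)z^{(l-1)}(ε) + O(ε^{n-l}) and z^{(l+1)}(ε) = C_2^{(l)}(ε)z^{(l-1)}(ε) + ε^{n-l-1}W_a^{(l+1)⊤}⋯W_a^{(n-1)⊤}y + O(ε^{n-l}), where the implicit constants in the O(·) bounds depend on the fixed matrices, on ‖z^{(0)}‖ and on ‖y‖ only. -/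
/-!
Eliminating the layers from the top down turns the equilibrium equations into the forward
recursion `z (l + 1) = G_l(ε) z l + ε ^ (m - l) H_l(ε) y`, with `G_l = M_l⁻¹ W_b^{(l)}`,
`H_l = M_l⁻¹ W_a^{(l+1)ᵀ} H_{l+1}` and `M_l = I + ε Qᵀ Q - ε W_a^{(l+1)ᵀ} G_{l+1}`. Since
`M_l(0) = I`, all these matrices are analytic near `ε = 0` (inverses through adjugate and
determinant), so cutting the Taylor series of `G_l` and `G_{l+1} G_l` after order `m - l - 1`
leaves an `O(ε ^ (m - l))` error, uniformly for bounded `x, y` because `z` is linear in `(x, y)`.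
At `ε = 0` the recursion for `H` collapses to the chain of transposed feedback weights, which is
therefore the only `y`-dependence of `z (l + 2)` left at order `ε ^ (m - l - 1)`.
-/

open Matrix Filter Topology Asymptotics

section Analytic

variable {𝕜 : Type*} [NontriviallyNormedField 𝕜]

lemma Matrix.norm_mulVec_le_sum_norm {m n : Type*} [Fintype m] [Fintype n] (A : Matrix m n 𝕜)
    (v : n → 𝕜) : ‖A *ᵥ v‖ ≤ (∑ i, ∑ j, ‖A i j‖) * ‖v‖ := by
  refine (pi_norm_le_iff_of_nonneg (by positivity)).mpr fun i => ?_
  calc ‖(A *ᵥ v) i‖ ≤ ∑ j, ‖A i j‖ * ‖v‖ := by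
        refine (norm_sum_le _ _).trans (Finset.sum_le_sum fun j _ => ?_)
        exact (norm_mul_le _ _).trans (by gcongr; exact norm_le_pi_norm v j)
    _ = (∑ j, ‖A i j‖) * ‖v‖ := (Finset.sum_mul ..).symm
    _ ≤ (∑ i, ∑ j, ‖A i j‖) * ‖v‖ := by
        gcongr
        exact Finset.single_le_sum (f := fun i => ∑ j, ‖A i j‖) (fun _ _ => by positivity)
          (Finset.mem_univ i)

open Polynomial in
lemma AnalyticAt.exists_polynomial_isBigO {f : 𝕜 → 𝕜} (hf : AnalyticAt 𝕜 f 0) (N : ℕ) :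
    ∃ p : 𝕜[X], p.natDegree ≤ N ∧ (fun ε => f ε - p.eval ε) =O[𝓝 0] (· ^ (N + 1)) := by
  obtain ⟨q, hq⟩ := hf
  refine ⟨∑ k ∈ Finset.range (N + 1), C (q.coeff k) * X ^ k, ?_, ?_⟩
  · refine natDegree_sum_le_of_forall_le _ _ fun k hk => ?_
    exact (natDegree_C_mul_X_pow_le _ _).trans (Finset.mem_range_succ_iff.mp hk)
  · have heval (ε : 𝕜) : (∑ k ∈ Finset.range (N + 1), C (q.coeff k) * X ^ k).eval ε
        = q.partialSum (N + 1) ε := by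
      simp only [FormalMultilinearSeries.partialSum, eval_finsetSum, eval_mul, eval_C, eval_pow,
        eval_X, FormalMultilinearSeries.apply_eq_pow_smul_coeff, smul_eq_mul, mul_comm]
    simp only [heval]
    have := hq.isBigO_sub_partialSum_pow (N + 1)
    simp only [zero_add, ← norm_pow] at this
    exact isBigO_norm_right.mp this

variable {l m n : Type*}

def EntrywiseAnalyticAt (A : 𝕜 → Matrix m n 𝕜) (x : 𝕜) : Prop :=
  ∀ i j, AnalyticAt 𝕜 (fun ε => A ε i j) x

namespace EntrywiseAnalyticAt

variable {A B : 𝕜 → Matrix m n 𝕜} {x : 𝕜}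

lemma const (C : Matrix m n 𝕜) : EntrywiseAnalyticAt (fun _ => C) x :=
  fun _ _ => analyticAt_const

lemma add (hA : EntrywiseAnalyticAt A x) (hB : EntrywiseAnalyticAt B x) :
    EntrywiseAnalyticAt (fun ε => A ε + B ε) x :=
  fun i j => (hA i j).add (hB i j)

lemma sub (hA : EntrywiseAnalyticAt A x) (hB : EntrywiseAnalyticAt B x) :
    EntrywiseAnalyticAt (fun ε => A ε - B ε) x :=
  fun i j => (hA i j).sub (hB i j)

lemma smul {f : 𝕜 → 𝕜} (hf : AnalyticAt 𝕜 f x) (hA : EntrywiseAnalyticAt A x) :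
    EntrywiseAnalyticAt (fun ε => f ε • A ε) x :=
  fun i j => hf.mul (hA i j)

lemma mul [Fintype n] {B : 𝕜 → Matrix n l 𝕜} (hA : EntrywiseAnalyticAt A x)
    (hB : EntrywiseAnalyticAt B x) : EntrywiseAnalyticAt (fun ε => A ε * B ε) x :=
  fun i k => Finset.analyticAt_fun_sum _ fun j _ => (hA i j).mul (hB j k)

lemma mulVec [Fintype m] [Fintype n] {v : 𝕜 → n → 𝕜} (hA : EntrywiseAnalyticAt A x)
    (hv : AnalyticAt 𝕜 v x) :
    AnalyticAt 𝕜 (fun ε => A ε *ᵥ v ε) x :=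
  analyticAt_pi_iff.mpr fun i =>
    Finset.analyticAt_fun_sum _ fun j _ => (hA i j).mul (analyticAt_pi_iff.mp hv j)

lemma isBigO_one (hA : EntrywiseAnalyticAt A 0) (i : m) (j : n) :
    (fun ε => A ε i j) =O[𝓝 0] (· ^ 0) := by
  simpa using (hA i j).continuousAt.tendsto.isBigO_one 𝕜

lemma isBigO_sub_apply_zero (hA : EntrywiseAnalyticAt A 0) (i : m) (j : n) :
    (fun ε => (A ε - A 0) i j) =O[𝓝 0] (· ^ 1) := by
  simpa using (hA i j).differentiableAt.hasFDerivAt.isBigO_sub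

open Polynomial in
lemma exists_polynomial_isBigO (hA : EntrywiseAnalyticAt A 0) (N : ℕ) :
    ∃ P : 𝕜 → Matrix m n 𝕜, (∀ i j, ∃ p : 𝕜[X], p.natDegree ≤ N ∧ ∀ ε, P ε i j = p.eval ε) ∧
      ∀ i j, (fun ε => (A ε - P ε) i j) =O[𝓝 0] (· ^ (N + 1)) := by
  choose p hp hO using fun i j => (hA i j).exists_polynomial_isBigO N
  exact ⟨fun ε => of fun i j => (p i j).eval ε, fun i j => ⟨p i j, hp i j, fun _ => rfl⟩, hO⟩

variable [Fintype n] [DecidableEq n] {A : 𝕜 → Matrix n n 𝕜}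

lemma det (hA : EntrywiseAnalyticAt A x) : AnalyticAt 𝕜 (fun ε => (A ε).det) x := by
  simp only [Matrix.det_apply, Units.smul_def, zsmul_eq_mul]
  exact Finset.analyticAt_fun_sum _ fun σ _ =>
    analyticAt_const.mul (Finset.analyticAt_fun_prod _ fun i _ => hA (σ i) i)

lemma adjugate (hA : EntrywiseAnalyticAt A x) :
    EntrywiseAnalyticAt (fun ε => (A ε).adjugate) x := by
  intro i j
  simp only [Matrix.adjugate_apply]
  refine det fun a b => ?_
  simp only [Matrix.updateRow_apply]
  split_ifs
  exacts [analyticAt_const, hA a b]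

lemma inv (hA : EntrywiseAnalyticAt A x) (hx : (A x).det ≠ 0) :
    EntrywiseAnalyticAt (fun ε => (A ε)⁻¹) x := by
  intro i j
  simp only [Matrix.inv_def, Ring.inverse_eq_inv', Matrix.smul_apply, smul_eq_mul]
  exact (hA.det.inv hx).mul (hA.adjugate i j)

end EntrywiseAnalyticAt

section UniformBigO

variable {X Y E : Type*} [SeminormedAddCommGroup X] [SeminormedAddCommGroup Y]

/-- `u ε x y = O(‖ε‖ ^ N (‖x‖ + ‖y‖))` as `ε → 0`, with one constant for all `x` and `y`. -/
def IsUniformBigOPow [Norm E] (N : ℕ) (u : 𝕜 → X → Y → E) : Prop :=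
  ∃ C, 0 ≤ C ∧ ∀ᶠ ε in 𝓝 0, ∀ x y, ‖u ε x y‖ ≤ C * (‖x‖ + ‖y‖) * ‖ε‖ ^ N

lemma isUniformBigOPow_fst : IsUniformBigOPow (𝕜 := 𝕜) 0 (fun _ (x : X) (_ : Y) => x) :=
  ⟨1, zero_le_one, .of_forall fun _ x y => by simp⟩

lemma isUniformBigOPow_snd : IsUniformBigOPow (𝕜 := 𝕜) 0 (fun _ (_ : X) (y : Y) => y) :=
  ⟨1, zero_le_one, .of_forall fun _ x y => by simp⟩

namespace IsUniformBigOPow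

variable {M N : ℕ}

lemma add [SeminormedAddCommGroup E] {u v : 𝕜 → X → Y → E} (hu : IsUniformBigOPow N u)
    (hv : IsUniformBigOPow N v) : IsUniformBigOPow N (fun ε x y => u ε x y + v ε x y) := by
  obtain ⟨C, hC, hu⟩ := hu
  obtain ⟨D, hD, hv⟩ := hv
  refine ⟨C + D, by positivity, ?_⟩
  filter_upwards [hu, hv] with ε hu hv x y
  exact (norm_add_le _ _).trans (by linarith [hu x y, hv x y])

lemma mono [Norm E] {u : 𝕜 → X → Y → E} (hu : IsUniformBigOPow N u) (hMN : M ≤ N) :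
    IsUniformBigOPow M u := by
  obtain ⟨C, hC, hu⟩ := hu
  refine ⟨C, hC, ?_⟩
  filter_upwards [hu, eventually_norm_sub_lt (0 : 𝕜) zero_lt_one] with ε hu hε x y
  rw [sub_zero] at hε
  exact (hu x y).trans <|
    mul_le_mul_of_nonneg_left (pow_le_pow_of_le_one (norm_nonneg ε) hε.le hMN) (by positivity)

lemma pow_smul [SeminormedAddCommGroup E] [NormedSpace 𝕜 E] {u : 𝕜 → X → Y → E}
    (hu : IsUniformBigOPow N u) (k : ℕ) :
    IsUniformBigOPow (k + N) (fun ε x y => ε ^ k • u ε x y) := by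
  obtain ⟨C, hC, hu⟩ := hu
  refine ⟨C, hC, ?_⟩
  filter_upwards [hu] with ε hu x y
  rw [norm_smul, norm_pow, pow_add]
  calc ‖ε‖ ^ k * ‖u ε x y‖ ≤ ‖ε‖ ^ k * (C * (‖x‖ + ‖y‖) * ‖ε‖ ^ N) := by gcongr; exact hu x y
    _ = _ := by ring

lemma mulVec {m n : Type*} [Fintype m] [Fintype n] {A : 𝕜 → Matrix m n 𝕜}
    (hA : ∀ i j, (fun ε => A ε i j) =O[𝓝 0] (· ^ M)) {u : 𝕜 → X → Y → n → 𝕜}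
    (hu : IsUniformBigOPow N u) :
    IsUniformBigOPow (M + N) (fun ε x y => A ε *ᵥ u ε x y) := by
  obtain ⟨c, hc, hS⟩ := (IsBigO.fun_sum fun i _ => IsBigO.fun_sum fun j _ => (hA i j).norm_left
    : (fun ε => ∑ i, ∑ j, ‖A ε i j‖) =O[𝓝 0] (· ^ M)).exists_nonneg
  obtain ⟨C, hC, hu⟩ := hu
  refine ⟨c * C, by positivity, ?_⟩
  filter_upwards [hu, hS.bound] with ε hu hS x y
  rw [Real.norm_of_nonneg (by positivity), norm_pow] at hS
  calc ‖A ε *ᵥ u ε x y‖ ≤ (∑ i, ∑ j, ‖A ε i j‖) * ‖u ε x y‖ := norm_mulVec_le_sum_norm _ _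
    _ ≤ c * ‖ε‖ ^ M * (C * (‖x‖ + ‖y‖) * ‖ε‖ ^ N) := by gcongr; exact hu x y
    _ = c * C * (‖x‖ + ‖y‖) * ‖ε‖ ^ (M + N) := by ring

lemma exists_bound₂ {F : Type*} [Norm E] [Norm F] {u : ℝ → X → Y → E} {v : ℝ → X → Y → F}
    (hu : IsUniformBigOPow N u) (hv : IsUniformBigOPow N v) :
    ∃ K : ℝ → ℝ → ℝ, ∃ ε₁ : ℝ, 0 < ε₁ ∧ ∀ x y, ∀ ε ∈ Set.Ioo (0 : ℝ) ε₁,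
      ‖u ε x y‖ ≤ K ‖x‖ ‖y‖ * ε ^ N ∧ ‖v ε x y‖ ≤ K ‖x‖ ‖y‖ * ε ^ N := by
  obtain ⟨C, -, hu⟩ := hu
  obtain ⟨D, -, hv⟩ := hv
  obtain ⟨ε₁, hε₁, h⟩ := Metric.eventually_nhds_iff.mp (hu.and hv)
  refine ⟨fun a b => max C D * (a + b), ε₁, hε₁, fun x y ε hε => ?_⟩
  have hε' : dist ε 0 < ε₁ := by rw [Real.dist_0_eq_abs, abs_of_pos hε.1]; exact hε.2
  obtain ⟨hu, hv⟩ := h hε'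
  rw [Real.norm_of_nonneg hε.1.le] at hu hv
  have : 0 ≤ (‖x‖ + ‖y‖) * ε ^ N := by have := hε.1; positivity
  constructor
  · exact (hu x y).trans (by nlinarith [le_max_left C D])
  · exact (hv x y).trans (by nlinarith [le_max_right C D])

end IsUniformBigOPow

end UniformBigO

end Analytic

section BioCCPC

variable (m : ℕ) {d kk : ℕ → ℕ} (Wb Wa : (l : ℕ) → Matrix (Fin (d (l + 1))) (Fin (d l)) ℝ)
  (Q : (l : ℕ) → Matrix (Fin (kk l)) (Fin (d l)) ℝ)
  (chain : (j : ℕ) → Matrix (Fin (d j)) (Fin (d (m + 1))) ℝ)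

-- The output layer is clamped through `transferMatrix m = 0` and `targetMatrix m = chain (m + 1)`.
noncomputable def transferMatrix (l : ℕ) (ε : ℝ) : Matrix (Fin (d (l + 1))) (Fin (d l)) ℝ :=
  if l < m then
    (1 + ε • ((Q (l + 1))ᵀ * Q (l + 1)) - ε • ((Wa (l + 1))ᵀ * transferMatrix (l + 1) ε))⁻¹
      * Wb l
  else 0
termination_by m - l

-- Its inverse is the paper's `B_{m-l}` (there `n = m + 1`).
noncomputable def reducedMatrix (l : ℕ) (ε : ℝ) : Matrix (Fin (d (l + 1))) (Fin (d (l + 1))) ℝ :=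
  1 + ε • ((Q (l + 1))ᵀ * Q (l + 1)) - ε • ((Wa (l + 1))ᵀ * transferMatrix m Wb Wa Q (l + 1) ε)

noncomputable def targetMatrix (l : ℕ) (ε : ℝ) : Matrix (Fin (d (l + 1))) (Fin (d (m + 1))) ℝ :=
  if l < m then (reducedMatrix m Wb Wa Q l ε)⁻¹ * ((Wa (l + 1))ᵀ * targetMatrix (l + 1) ε)
  else chain (l + 1)
termination_by m - l

noncomputable def equilibrium (ε : ℝ) (x : Fin (d 0) → ℝ) (y : Fin (d (m + 1)) → ℝ) :
    (l : ℕ) → Fin (d l) → ℝ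
  | 0 => x
  | l + 1 => transferMatrix m Wb Wa Q l ε *ᵥ equilibrium ε x y l
      + ε ^ (m - l) • (targetMatrix m Wb Wa Q chain l ε *ᵥ y)

variable {m Wb Wa Q chain}

lemma transferMatrix_of_lt {l : ℕ} (hl : l < m) :
    transferMatrix m Wb Wa Q l = fun ε => (reducedMatrix m Wb Wa Q l ε)⁻¹ * Wb l := by
  ext ε : 1
  rw [transferMatrix, if_pos hl, reducedMatrix]

lemma transferMatrix_of_le {l : ℕ} (hl : m ≤ l) : transferMatrix m Wb Wa Q l = 0 := by
  ext ε : 1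
  rw [transferMatrix, if_neg hl.not_gt]
  rfl

lemma targetMatrix_of_lt {l : ℕ} (hl : l < m) :
    targetMatrix m Wb Wa Q chain l = fun ε =>
      (reducedMatrix m Wb Wa Q l ε)⁻¹
        * ((Wa (l + 1))ᵀ * targetMatrix m Wb Wa Q chain (l + 1) ε) := by
  ext ε : 1
  rw [targetMatrix, if_pos hl]

lemma targetMatrix_of_le {l : ℕ} (hl : m ≤ l) :
    targetMatrix m Wb Wa Q chain l = fun _ => chain (l + 1) := by
  ext ε : 1
  rw [targetMatrix, if_neg hl.not_gt]

lemma reducedMatrix_apply_zero (l : ℕ) : reducedMatrix m Wb Wa Q l 0 = 1 := by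
  simp [reducedMatrix]

lemma equilibrium_succ (ε : ℝ) (x : Fin (d 0) → ℝ) (y : Fin (d (m + 1)) → ℝ) (l : ℕ) :
    equilibrium m Wb Wa Q chain ε x y (l + 1) =
      transferMatrix m Wb Wa Q l ε *ᵥ equilibrium m Wb Wa Q chain ε x y l
        + ε ^ (m - l) • (targetMatrix m Wb Wa Q chain l ε *ᵥ y) := rfl

lemma equilibrium_equation {l : ℕ} (hl : l < m) {ε : ℝ}
    (hM : IsUnit (reducedMatrix m Wb Wa Q l ε).det) (x : Fin (d 0) → ℝ)
    (y : Fin (d (m + 1)) → ℝ) :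
    let z := equilibrium m Wb Wa Q chain ε x y
    Wb l *ᵥ z l + ε • ((Wa (l + 1))ᵀ *ᵥ z (l + 2)) - z (l + 1)
      - ε • ((Q (l + 1))ᵀ *ᵥ (Q (l + 1) *ᵥ z (l + 1))) = 0 := by
  intro z
  have hreduced : reducedMatrix m Wb Wa Q l ε *ᵥ z (l + 1) = Wb l *ᵥ z l
      + ε ^ (m - l) • ((Wa (l + 1))ᵀ *ᵥ (targetMatrix m Wb Wa Q chain (l + 1) ε *ᵥ y)) := by
    simp only [z, equilibrium_succ, transferMatrix_of_lt hl, targetMatrix_of_lt hl, mulVec_add,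
      mulVec_smul, mulVec_mulVec, ← Matrix.mul_assoc, mul_nonsing_inv _ hM, Matrix.one_mul]
  have hnext : z (l + 2) = transferMatrix m Wb Wa Q (l + 1) ε *ᵥ z (l + 1)
      + ε ^ (m - (l + 1)) • (targetMatrix m Wb Wa Q chain (l + 1) ε *ᵥ y) := rfl
  have hpow : ε * ε ^ (m - (l + 1)) = ε ^ (m - l) := by
    rw [← pow_succ']; congr 1; omega
  calc
    _ = Wb l *ᵥ z l
        + ε ^ (m - l) • ((Wa (l + 1))ᵀ *ᵥ (targetMatrix m Wb Wa Q chain (l + 1) ε *ᵥ y))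
        - reducedMatrix m Wb Wa Q l ε *ᵥ z (l + 1) := by
      rw [hnext, reducedMatrix, mulVec_add, mulVec_smul,
        smul_add, smul_smul, hpow, sub_mulVec, add_mulVec, smul_mulVec, smul_mulVec, one_mulVec,
        mulVec_mulVec, mulVec_mulVec, mulVec_mulVec]
      abel
    _ = 0 := by rw [hreduced, sub_self]


lemma equilibrium_top (hchainTop : chain (m + 1) = 1) (ε : ℝ) (x : Fin (d 0) → ℝ)
    (y : Fin (d (m + 1)) → ℝ) : equilibrium m Wb Wa Q chain ε x y (m + 1) = y := by
  rw [equilibrium_succ, transferMatrix_of_le le_rfl, targetMatrix_of_le le_rfl, hchainTop]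
  simp

lemma entrywiseAnalyticAt_reducedMatrix {l : ℕ}
    (hG : EntrywiseAnalyticAt (transferMatrix m Wb Wa Q (l + 1)) 0) :
    EntrywiseAnalyticAt (reducedMatrix m Wb Wa Q l) 0 :=
  ((EntrywiseAnalyticAt.const 1).add (.smul analyticAt_id (.const _))).sub
    (.smul analyticAt_id ((EntrywiseAnalyticAt.const _).mul hG))

lemma entrywiseAnalyticAt_transferMatrix (l : ℕ) :
    EntrywiseAnalyticAt (transferMatrix m Wb Wa Q l) 0 := by
  by_cases hl : l < m
  · rw [transferMatrix_of_lt hl]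
    exact ((entrywiseAnalyticAt_reducedMatrix (entrywiseAnalyticAt_transferMatrix (l + 1))).inv
      (by simp [reducedMatrix_apply_zero])).mul (.const _)
  · rw [transferMatrix_of_le (not_lt.mp hl)]
    exact .const 0
termination_by m - l

lemma entrywiseAnalyticAt_targetMatrix (l : ℕ) :
    EntrywiseAnalyticAt (targetMatrix m Wb Wa Q chain l) 0 := by
  by_cases hl : l < m
  · rw [targetMatrix_of_lt hl]
    exact ((entrywiseAnalyticAt_reducedMatrix (entrywiseAnalyticAt_transferMatrix (l + 1))).inv
      (by simp [reducedMatrix_apply_zero])).mul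
      ((EntrywiseAnalyticAt.const _).mul (entrywiseAnalyticAt_targetMatrix (l + 1)))
  · rw [targetMatrix_of_le (not_lt.mp hl)]
    exact .const _
termination_by m - l

lemma targetMatrix_apply_zero (hchain : ∀ j, j ≤ m → chain j = (Wa j)ᵀ * chain (j + 1))
    (l : ℕ) : targetMatrix m Wb Wa Q chain l 0 = chain (l + 1) := by
  by_cases hl : l < m
  · rw [targetMatrix_of_lt hl]
    simp only [reducedMatrix_apply_zero, inv_one, Matrix.one_mul,
      targetMatrix_apply_zero hchain (l + 1)]
    exact (hchain (l + 1) hl).symm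
  · rw [targetMatrix_of_le (not_lt.mp hl)]
termination_by m - l

lemma eventually_isUnit_det_reducedMatrix :
    ∀ᶠ ε in 𝓝 0, ∀ l < m, IsUnit (reducedMatrix m Wb Wa Q l ε).det := by
  refine (eventually_all_finite (Set.finite_Iio m)).mpr fun l _ => ?_
  have hdet : AnalyticAt ℝ (fun ε => (reducedMatrix m Wb Wa Q l ε).det) 0 :=
    (entrywiseAnalyticAt_reducedMatrix (entrywiseAnalyticAt_transferMatrix (l + 1))).det
  filter_upwards [hdet.continuousAt.eventually_ne
    (show (reducedMatrix m Wb Wa Q l 0).det ≠ 0 by simp [reducedMatrix_apply_zero])] with ε hε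
  exact isUnit_iff_ne_zero.mpr hε

lemma analyticAt_equilibrium (x : Fin (d 0) → ℝ) (y : Fin (d (m + 1)) → ℝ) (l : ℕ) :
    AnalyticAt ℝ (fun ε => equilibrium m Wb Wa Q chain ε x y l) 0 := by
  induction l with
  | zero => exact analyticAt_const
  | succ l ih =>
    exact ((entrywiseAnalyticAt_transferMatrix l).mulVec ih).add ((analyticAt_id.pow _).smul
      ((entrywiseAnalyticAt_targetMatrix l).mulVec analyticAt_const))

lemma isUniformBigOPow_equilibrium (l : ℕ) :
    IsUniformBigOPow 0 (fun ε x y => equilibrium m Wb Wa Q chain ε x y l) := by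
  induction l with
  | zero => exact isUniformBigOPow_fst
  | succ l ih =>
    exact (ih.mulVec (entrywiseAnalyticAt_transferMatrix l).isBigO_one).add
      (((isUniformBigOPow_snd.mulVec (entrywiseAnalyticAt_targetMatrix l).isBigO_one).pow_smul
        _).mono (Nat.zero_le _))

lemma isUniformBigOPow_equilibrium_succ_sub {l : ℕ}
    {C : ℝ → Matrix (Fin (d (l + 1))) (Fin (d l)) ℝ}
    (hC : ∀ i j, (fun ε => (transferMatrix m Wb Wa Q l ε - C ε) i j) =O[𝓝 0] (· ^ (m - l))) :
    IsUniformBigOPow (m - l) (fun ε x y =>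
      equilibrium m Wb Wa Q chain ε x y (l + 1) - C ε *ᵥ equilibrium m Wb Wa Q chain ε x y l) := by
  have hsplit : (fun ε x y =>
      equilibrium m Wb Wa Q chain ε x y (l + 1) - C ε *ᵥ equilibrium m Wb Wa Q chain ε x y l) =
      fun ε x y => (transferMatrix m Wb Wa Q l ε - C ε) *ᵥ equilibrium m Wb Wa Q chain ε x y l
        + ε ^ (m - l) • (targetMatrix m Wb Wa Q chain l ε *ᵥ y) := by
    funext ε x y
    rw [equilibrium_succ, sub_mulVec]
    abel
  rw [hsplit]
  exact ((isUniformBigOPow_equilibrium l).mulVec hC).add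
    ((isUniformBigOPow_snd.mulVec (entrywiseAnalyticAt_targetMatrix l).isBigO_one).pow_smul _)

lemma isUniformBigOPow_equilibrium_add_two_sub
    (hchain : ∀ j, j ≤ m → chain j = (Wa j)ᵀ * chain (j + 1)) {l : ℕ} (hl : l + 1 ≤ m)
    {C : ℝ → Matrix (Fin (d (l + 2))) (Fin (d l)) ℝ}
    (hC : ∀ i j, (fun ε => (transferMatrix m Wb Wa Q (l + 1) ε * transferMatrix m Wb Wa Q l ε
      - C ε) i j) =O[𝓝 0] (· ^ (m - l))) :
    IsUniformBigOPow (m - l) (fun ε x y => equilibrium m Wb Wa Q chain ε x y (l + 2)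
      - C ε *ᵥ equilibrium m Wb Wa Q chain ε x y l - ε ^ (m - l - 1) • (chain (l + 2) *ᵥ y)) := by
  have hsplit : (fun ε x y => equilibrium m Wb Wa Q chain ε x y (l + 2)
      - C ε *ᵥ equilibrium m Wb Wa Q chain ε x y l - ε ^ (m - l - 1) • (chain (l + 2) *ᵥ y)) =
      fun ε x y => (transferMatrix m Wb Wa Q (l + 1) ε * transferMatrix m Wb Wa Q l ε - C ε)
          *ᵥ equilibrium m Wb Wa Q chain ε x y l
        + ε ^ (m - l) • (transferMatrix m Wb Wa Q (l + 1) ε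
          *ᵥ (targetMatrix m Wb Wa Q chain l ε *ᵥ y))
        + ε ^ (m - l - 1) • ((targetMatrix m Wb Wa Q chain (l + 1) ε
          - targetMatrix m Wb Wa Q chain (l + 1) 0) *ᵥ y) := by
    funext ε x y
    rw [equilibrium_succ, equilibrium_succ, targetMatrix_apply_zero hchain, mulVec_add,
      mulVec_smul, mulVec_mulVec, sub_mulVec, sub_mulVec, smul_sub, Nat.sub_sub]
    abel
  rw [hsplit]
  exact (((isUniformBigOPow_equilibrium l).mulVec hC).add
    (((isUniformBigOPow_snd.mulVec (entrywiseAnalyticAt_targetMatrix l).isBigO_one).mulVec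
      (entrywiseAnalyticAt_transferMatrix (l + 1)).isBigO_one).pow_smul _)).add
    (((isUniformBigOPow_snd.mulVec
      (entrywiseAnalyticAt_targetMatrix (l + 1)).isBigO_sub_apply_zero).pow_smul _).mono
        (by omega))

end BioCCPC

theorem bioccpc_equilibrium_analytic_expansion_general
    (m : ℕ) (d kk : ℕ → ℕ)
    (Wb Wa : (l : ℕ) → Matrix (Fin (d (l + 1))) (Fin (d l)) ℝ)
    (Q : (l : ℕ) → Matrix (Fin (kk l)) (Fin (d l)) ℝ)
    -- the chain of transposed feedback weights `chain j = W_a^{(j)ᵀ} ⋯ W_a^{(m)ᵀ}`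
    (chain : (j : ℕ) → Matrix (Fin (d j)) (Fin (d (m + 1))) ℝ)
    (hchainTop : chain (m + 1) = 1)
    (hchain : ∀ j, j ≤ m → chain j = (Wa j)ᵀ * chain (j + 1)) :
    ∃ ε₀ : ℝ, 0 < ε₀ ∧
    ∃ zsol : ℝ → (Fin (d 0) → ℝ) → (Fin (d (m + 1)) → ℝ) → (l : ℕ) → Fin (d l) → ℝ,
      -- `zsol ε x y` solves the equilibrium equations with boundary values `x`, `y`
      (∀ ε ∈ Set.Ioo (0 : ℝ) ε₀, ∀ x y,
        zsol ε x y 0 = x ∧ zsol ε x y (m + 1) = y ∧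
        ∀ l, l < m →
          Wb l *ᵥ zsol ε x y l + ε • ((Wa (l + 1))ᵀ *ᵥ zsol ε x y (l + 2))
            - zsol ε x y (l + 1)
            - ε • ((Q (l + 1))ᵀ *ᵥ (Q (l + 1) *ᵥ zsol ε x y (l + 1))) = 0) ∧
      -- the equilibrium solution is analytic in `ε` on a neighborhood of `ε = 0`
      (∀ x y l i, AnalyticAt ℝ (fun ε => zsol ε x y l i) 0) ∧
      -- the leading-order expansions
      (∀ l, l + 1 ≤ m →
        ∃ C₁ : ℝ → Matrix (Fin (d (l + 1))) (Fin (d l)) ℝ,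
        ∃ C₂ : ℝ → Matrix (Fin (d (l + 2))) (Fin (d l)) ℝ,
          (∀ i j, ∃ p : Polynomial ℝ, p.natDegree ≤ m - l - 1 ∧
            ∀ ε, C₁ ε i j = p.eval ε) ∧
          (∀ i j, ∃ p : Polynomial ℝ, p.natDegree ≤ m - l - 1 ∧
            ∀ ε, C₂ ε i j = p.eval ε) ∧
          ∃ K : ℝ → ℝ → ℝ, ∃ ε₁ : ℝ, 0 < ε₁ ∧
            ∀ x y, ∀ ε ∈ Set.Ioo (0 : ℝ) ε₁,
              ‖zsol ε x y (l + 1) - C₁ ε *ᵥ zsol ε x y l‖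
                ≤ K ‖x‖ ‖y‖ * ε ^ (m - l) ∧
              ‖zsol ε x y (l + 2) - C₂ ε *ᵥ zsol ε x y l
                  - ε ^ (m - l - 1) • (chain (l + 2) *ᵥ y)‖
                ≤ K ‖x‖ ‖y‖ * ε ^ (m - l)) := by
  obtain ⟨ε₀, hε₀, hdet⟩ := Metric.eventually_nhds_iff.mp
    (eventually_isUnit_det_reducedMatrix (m := m) (Wb := Wb) (Wa := Wa) (Q := Q))
  refine ⟨ε₀, hε₀, equilibrium m Wb Wa Q chain, fun ε hε x y =>
    ⟨rfl, equilibrium_top hchainTop ε x y,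
      fun l hl => equilibrium_equation hl (hdet ?_ l hl) x y⟩,
    fun x y l i => analyticAt_pi_iff.mp (analyticAt_equilibrium x y l) i, fun l hl => ?_⟩
  · rw [Real.dist_0_eq_abs, abs_of_pos hε.1]
    exact hε.2
  have hN : m - l - 1 + 1 = m - l := by omega
  obtain ⟨C₁, hC₁, hG⟩ :=
    (entrywiseAnalyticAt_transferMatrix l).exists_polynomial_isBigO (m - l - 1)
  obtain ⟨C₂, hC₂, hGG⟩ := ((entrywiseAnalyticAt_transferMatrix (l + 1)).mul
    (entrywiseAnalyticAt_transferMatrix l)).exists_polynomial_isBigO (m - l - 1)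
  rw [hN] at hG hGG
  exact ⟨C₁, C₂, hC₁, hC₂, (isUniformBigOPow_equilibrium_succ_sub hG).exists_bound₂
    (isUniformBigOPow_equilibrium_add_two_sub hchain hl hGG)⟩

/-- **Analyticity and leading-order expansion of the BioCCPC equilibrium near ε = 0.**
For the `(n+1)`-layer linear BioCCPC network (`n = m + 1`) with fixed weights, the
equilibrium solution `z(ε)` (with clamped input `x` and output `y`) is well-defined and
analytic in `ε` on a neighborhood of `ε = 0`, and for each hidden pair of layers there
exist matrix-valued polynomials `C₁(ε)`, `C₂(ε)` of degree at most `n − l − 1`,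
independent of `y`, such that as `ε → 0⁺`:
`z^{(l)}(ε) = C₁(ε) z^{(l-1)}(ε) + O(ε^{n-l})` and
`z^{(l+1)}(ε) = C₂(ε) z^{(l-1)}(ε) + ε^{n-l-1} W_a^{(l+1)ᵀ}⋯W_a^{(n-1)ᵀ} y + O(ε^{n-l})`,
with implicit constants depending only on the fixed matrices, `‖x‖` and `‖y‖`.
(Here the hidden layer called `l` in the informal statement is `l + 1` below.) -/
theorem bioccpc_equilibrium_analytic_expansion
    (m : ℕ) (hm : 1 ≤ m) (d kk : ℕ → ℕ)
    (Wb Wa : (l : ℕ) → Matrix (Fin (d (l + 1))) (Fin (d l)) ℝ)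
    (Q : (l : ℕ) → Matrix (Fin (kk l)) (Fin (d l)) ℝ)
    -- the chain of transposed feedback weights `chain j = W_a^{(j)ᵀ} ⋯ W_a^{(m)ᵀ}`
    (chain : (j : ℕ) → Matrix (Fin (d j)) (Fin (d (m + 1))) ℝ)
    (hchainTop : chain (m + 1) = 1)
    (hchain : ∀ j, j ≤ m → chain j = (Wa j)ᵀ * chain (j + 1)) :
    ∃ ε₀ : ℝ, 0 < ε₀ ∧
    ∃ zsol : ℝ → (Fin (d 0) → ℝ) → (Fin (d (m + 1)) → ℝ) → (l : ℕ) → Fin (d l) → ℝ,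
      -- `zsol ε x y` solves the equilibrium equations with boundary values `x`, `y`
      (∀ ε ∈ Set.Ioo (0 : ℝ) ε₀, ∀ x y,
        zsol ε x y 0 = x ∧ zsol ε x y (m + 1) = y ∧
        ∀ l, l < m →
          Wb l *ᵥ zsol ε x y l + ε • ((Wa (l + 1))ᵀ *ᵥ zsol ε x y (l + 2))
            - zsol ε x y (l + 1)
            - ε • ((Q (l + 1))ᵀ *ᵥ (Q (l + 1) *ᵥ zsol ε x y (l + 1))) = 0) ∧
      -- the equilibrium solution is analytic in `ε` on a neighborhood of `ε = 0`
      (∀ x y l i, AnalyticAt ℝ (fun ε => zsol ε x y l i) 0) ∧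
      -- the leading-order expansions
      (∀ l, l + 1 ≤ m →
        ∃ C₁ : ℝ → Matrix (Fin (d (l + 1))) (Fin (d l)) ℝ,
        ∃ C₂ : ℝ → Matrix (Fin (d (l + 2))) (Fin (d l)) ℝ,
          (∀ i j, ∃ p : Polynomial ℝ, p.natDegree ≤ m - l - 1 ∧
            ∀ ε, C₁ ε i j = p.eval ε) ∧
          (∀ i j, ∃ p : Polynomial ℝ, p.natDegree ≤ m - l - 1 ∧
            ∀ ε, C₂ ε i j = p.eval ε) ∧
          ∃ K : ℝ → ℝ → ℝ, ∃ ε₁ : ℝ, 0 < ε₁ ∧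
            ∀ x y, ∀ ε ∈ Set.Ioo (0 : ℝ) ε₁,
              ‖zsol ε x y (l + 1) - C₁ ε *ᵥ zsol ε x y l‖
                ≤ K ‖x‖ ‖y‖ * ε ^ (m - l) ∧
              ‖zsol ε x y (l + 2) - C₂ ε *ᵥ zsol ε x y l
                  - ε ^ (m - l - 1) • (chain (l + 2) *ᵥ y)‖
                ≤ K ‖x‖ ‖y‖ * ε ^ (m - l)) :=
  bioccpc_equilibrium_analytic_expansion_general m d kk Wb Wa Q chain hchainTop hchain
end

section
/- Consider the (n+1)-layer linear BioCCPC network with c^{(l)} = 0 and fixed (ε-independent) weight matrices W_a^{(l)}, W_b^{(l)}, and for each ε ∈ (0, ε_0) let Q^{(l)}(ε) be interneuron weight matrices with ‖Q^{(l)}(ε)‖ bounded as ε → 0⁺. For training samples (x_t, y_t), t = 1, …, T+1, let z_t^{(l)}(ε) be the equilibrium latent variables of the neural dynamics (so that g_b W_b^{(l-1)}z_t^{(l-1)} + g_a W_a^{(l)⊤}z_t^{(l+1)} − g_b z_t^{(l)} − g_a Q^{(l)}(ε)^⊤Q^{(l)}(ε)z_t^{(l)} = 0 with z_t^{(0)}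 = x_t, z_t^{(n)} = y_t, ε = g_a/g_b), collected into data matrices Z^{(l)}(ε) over t = 1, …, T, and assume Z^{(l-1)}(ε)Z^{(l-1)}(ε)^⊤ is invertible with inverse bounded as ε → 0⁺. Suppose the learning-rule equilibrium Q^{(l)}(ε)^⊤Q^{(l)}(ε)Z^{(l)}(ε)Z^{(l-1)}(ε)^⊤ = W_a^{(l)⊤}Z^{(l+1)}(ε)Z^{(l-1)}(ε)^⊤ holds over the first T samples. Then the basal weight update for the new sample, δW_b^{(l-1)} ∝ ε(W_a^{(l)⊤}z_{T+1}^{(l+1)} − Q^{(l)}(ε)^⊤Q^{(l)}(ε)z_{T+1}^{(l)})z_{T+1}^{(l-1)⊤}, satisfies δW_b^{(l-1)} = ε^{n-l}[W_a^{(l)⊤}W_a^{(l+1)⊤}⋯W_a^{(n-1)⊤}(y_{T+1} − ỹ_{T+1}(ε))]z_{T+1}^{(l-1)}(ε)^⊤ + O(ε^{n-l+1}) as ε → 0⁺, where ỹ_{T+1}(ε) = Y Z^{(l-1)}(ε)^⊤(Z^{(l-1)}(ε)Z^{(l-1)}(ε)^⊤)^{-1}z_{T+1}^{(l-1)}(ε)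 is the optimal linear prediction of y_{T+1} from z_{T+1}^{(l-1)}, and Y = [y_1, …, y_T]. -/
/-!
Let `P` be the least-squares coefficients of the new sample's layer-`l₀` activity on the training
samples and `e^{(j)} = z_T^{(j)} - Z^{(j)} P` the part of the new sample that the training
samples do not explain. By linearity `e` satisfies the same layer equations
`e^{(l+1)} = W_b e^{(l)} + ε (W_aᵀ e^{(l+2)} - QᵀQ e^{(l+1)})` as the latents; it vanishes at layer
`l₀`, equals `y - ỹ` at the output, and the learning equilibrium says exactly that the training
combination `Z P` has no apical potential, so `e^{(l₀+1)}` is `ε` times the apical potential of the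
new sample. Starting from the zero at layer `l₀`, every sweep through the layer equations gains a
factor `ε`, whence `e^{(j)} = O(ε^{m+1-j})`; a downward induction from the output then identifies
the leading term as `ε^{m+1-j} W_a^{(j)ᵀ} ⋯ W_a^{(m)ᵀ} (y - ỹ)`. The a priori bound on the latents
that starts the argument comes from absorbing the `O(ε)` apical terms for small `ε`.
-/

open Matrix Filter Asymptotics Topology

namespace Asymptotics

variable {α ι κ : Type*} [Fintype ι] [Fintype κ] {l : Filter α}

theorem IsBigO.mulVec {A : α → Matrix ι κ ℝ} {v : α → κ → ℝ} {f g : α → ℝ}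
    (hA : ∀ i j, (fun x => A x i j) =O[l] f) (hv : v =O[l] g) :
    (fun x => A x *ᵥ v x) =O[l] fun x => f x * g x :=
  isBigO_pi.2 fun i => IsBigO.fun_sum fun j _ => (hA i j).mul (isBigO_pi.1 hv j)

theorem IsBigO.const_mulVec (A : Matrix ι κ ℝ) {v : α → κ → ℝ} {g : α → ℝ} (hv : v =O[l] g) :
    (fun x => A *ᵥ v x) =O[l] g :=
  (IsBigO.mulVec (fun i j => isBigO_const_const (A i j) one_ne_zero l) hv).congr_right
    fun _ => one_mul _

theorem IsBigO.outerProduct {u : α → ι → ℝ} {v : α → κ → ℝ} {f g : α → ℝ}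
    (hu : u =O[l] f) (hv : v =O[l] g) :
    (fun x i j => u x i * v x j) =O[l] fun x => f x * g x :=
  isBigO_pi.2 fun i => isBigO_pi.2 fun j => (isBigO_pi.1 hu i).mul (isBigO_pi.1 hv j)

theorem IsBigO.id_smul_pow_succ {E : Type*} [SeminormedAddCommGroup E] [NormedSpace ℝ E]
    {l : Filter ℝ} {f : ℝ → E} {n : ℕ} (h : f =O[l] fun ε => ε ^ n) :
    (fun ε => ε • f ε) =O[l] fun ε => ε ^ (n + 1) :=
  ((isBigO_refl _ _).smul h).congr_right fun ε => by rw [smul_eq_mul, pow_succ']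

theorem isBigO_pow_pow_of_le {𝕜 : Type*} [NormedField 𝕜] {m n : ℕ} (h : m ≤ n) :
    (fun x : 𝕜 => x ^ n) =O[𝓝 0] fun x => x ^ m := by
  rcases h.eq_or_lt with rfl | h
  · exact isBigO_refl _ _
  · exact (isLittleO_pow_pow h).isBigO

theorem isBigO_one_of_isBigO_one_add_mul_norm {E : Type*} [SeminormedAddCommGroup E]
    {S : α → E} {φ : α → ℝ} (hφ : Tendsto φ l (𝓝 0))
    (h : S =O[l] fun x => 1 + φ x * ‖S x‖) : S =O[l] fun _ => (1 : ℝ) := by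
  obtain ⟨c, hc, hcS⟩ := h.exists_pos
  have hsmall : ∀ᶠ x in l, c * |φ x| < 1 / 2 :=
    (by simpa using hφ.abs.const_mul c : Tendsto (fun x => c * |φ x|) l (𝓝 0)).eventually_lt_const
      (by norm_num)
  refine IsBigO.of_bound (2 * c) ?_
  filter_upwards [hcS.bound, hsmall] with x hx hsx
  have hnorm : ‖1 + φ x * ‖S x‖‖ ≤ 1 + |φ x| * ‖S x‖ :=
    (norm_add_le _ _).trans (by simp)
  have habsorb := mul_le_mul_of_nonneg_right hsx.le (norm_nonneg (S x))
  rw [norm_one, mul_one]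
  nlinarith [mul_le_mul_of_nonneg_left hnorm hc.le]

theorem exists_forall_Ioo_abs_le_of_isBigO {F : ℝ → ι → κ → ℝ} {n : ℕ}
    (h : F =O[𝓝[>] 0] fun ε => ε ^ n) :
    ∃ K ε₁ : ℝ, 0 < K ∧ 0 < ε₁ ∧ ∀ ε ∈ Set.Ioo 0 ε₁, ∀ i j, |F ε i j| ≤ K * ε ^ n := by
  obtain ⟨K, hK, hKF⟩ := h.exists_pos
  obtain ⟨ε₁, hε₁, hsub⟩ := mem_nhdsGT_iff_exists_Ioo_subset.1 hKF.bound
  refine ⟨K, ε₁, hK, hε₁, fun ε hε i j => ?_⟩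
  calc |F ε i j| ≤ ‖F ε‖ := (norm_le_pi_norm (F ε i) j).trans (norm_le_pi_norm (F ε) i)
    _ ≤ K * ‖ε ^ n‖ := hsub hε
    _ = K * ε ^ n := by rw [norm_pow, Real.norm_of_nonneg hε.1.le]

end Asymptotics

theorem Matrix.of_mulVec_eq_sum {R ι κ : Type*} [CommSemiring R] [Fintype κ] (u : κ → ι → R)
    (c : κ → R) : of (fun i t => u t i) *ᵥ c = ∑ t, c t • u t := by
  ext i
  simp [mulVec, dotProduct, Finset.sum_apply, mul_comm]

namespace BioCCPC

variable {d kk : ℕ → ℕ} (Wb Wa : (l : ℕ) → Matrix (Fin (d (l + 1))) (Fin (d l)) ℝ)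

/-- The equilibrium equation of hidden layer `l + 1`, divided by `g_b`, reads
`z^{(l+1)} = latentMap Wb Wa Q ε l z`. -/
def latentMap (Q : (l : ℕ) → Matrix (Fin (kk l)) (Fin (d l)) ℝ) (ε : ℝ) (l : ℕ) :
    ((j : ℕ) → Fin (d j) → ℝ) →ₗ[ℝ] Fin (d (l + 1)) → ℝ where
  toFun v := Wb l *ᵥ v l +
    ε • ((Wa (l + 1))ᵀ *ᵥ v (l + 2) - (Q (l + 1))ᵀ *ᵥ (Q (l + 1) *ᵥ v (l + 1)))
  map_add' u v := by simp only [Pi.add_apply, mulVec_add]; module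
  map_smul' c v := by simp only [Pi.smul_apply, mulVec_smul, RingHom.id_apply]; module

theorem latentMap_apply (Q : (l : ℕ) → Matrix (Fin (kk l)) (Fin (d l)) ℝ) (ε : ℝ) (l : ℕ)
    (v : (j : ℕ) → Fin (d j) → ℝ) :
    latentMap Wb Wa Q ε l v = Wb l *ᵥ v l +
      ε • ((Wa (l + 1))ᵀ *ᵥ v (l + 2) - (Q (l + 1))ᵀ *ᵥ (Q (l + 1) *ᵥ v (l + 1))) :=
  rfl

theorem eq_latentMap_of_equilibrium {Q : (l : ℕ) → Matrix (Fin (kk l)) (Fin (d l)) ℝ}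
    {ga gb ε : ℝ} (hgb : 0 < gb) (hε : ε = ga / gb) {l : ℕ} {v : (j : ℕ) → Fin (d j) → ℝ}
    (h : gb • (Wb l *ᵥ v l) + ga • ((Wa (l + 1))ᵀ *ᵥ v (l + 2)) - gb • v (l + 1)
      - ga • ((Q (l + 1))ᵀ *ᵥ (Q (l + 1) *ᵥ v (l + 1))) = 0) :
    v (l + 1) = latentMap Wb Wa Q ε l v := by
  obtain rfl : ga = gb * ε := by rw [hε]; field_simp
  have : gb • (latentMap Wb Wa Q ε l v - v (l + 1)) = 0 := by
    rw [← h, latentMap_apply]; module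
  exact (sub_eq_zero.1 ((smul_eq_zero.1 this).resolve_left hgb.ne')).symm

variable {Q : ℝ → (l : ℕ) → Matrix (Fin (kk l)) (Fin (d l)) ℝ} {m : ℕ}

theorem isBigO_apical {l : ℕ} (hQ : ∀ i j, (fun ε => Q ε l i j) =O[𝓝[>] 0] fun _ => (1 : ℝ))
    {u : ℝ → Fin (d (l + 1)) → ℝ} {v : ℝ → Fin (d l) → ℝ} {g : ℝ → ℝ}
    (hu : u =O[𝓝[>] 0] g) (hv : v =O[𝓝[>] 0] g) :
    (fun ε => (Wa l)ᵀ *ᵥ u ε - (Q ε l)ᵀ *ᵥ (Q ε l *ᵥ v ε)) =O[𝓝[>] 0] g := by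
  have hQv := (IsBigO.mulVec hQ hv).congr_right fun _ => one_mul _
  exact (hu.const_mulVec _).sub
    ((IsBigO.mulVec (fun i j => hQ j i) hQv).congr_right fun _ => one_mul _)

theorem isBigO_one_of_eq_latentMap
    (hQ : ∀ l ≤ m, ∀ i j, (fun ε => Q ε l i j) =O[𝓝[>] 0] fun _ => (1 : ℝ))
    {v : ℝ → (j : ℕ) → Fin (d j) → ℝ}
    (hin : (fun ε => v ε 0) =O[𝓝[>] 0] fun _ => (1 : ℝ))
    (hout : (fun ε => v ε (m + 1)) =O[𝓝[>] 0] fun _ => (1 : ℝ))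
    (hrec : ∀ l < m, ∀ᶠ ε in 𝓝[>] 0, v ε (l + 1) = latentMap Wb Wa (Q ε) ε l (v ε)) :
    ∀ j ≤ m + 1, (fun ε => v ε j) =O[𝓝[>] 0] fun _ => (1 : ℝ) := by
  set S : ℝ → ℝ := fun ε => ∑ j ∈ Finset.range (m + 2), ‖v ε j‖
  have hvS : ∀ j ≤ m + 1, (fun ε => v ε j) =O[𝓝[>] 0] fun ε => ‖S ε‖ := fun j hj =>
    isBigO_of_le _ fun ε => (Finset.single_le_sum (f := fun j => ‖v ε j‖)
      (fun _ _ => norm_nonneg _) (Finset.mem_range.2 (show j < m + 2 by omega))).trans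
      (by rw [norm_norm]; exact Real.le_norm_self _)
  have hpos : ∀ᶠ ε in 𝓝[>] (0 : ℝ), 0 ≤ ε * ‖S ε‖ :=
    eventually_mem_nhdsWithin.mono fun ε hε => mul_nonneg (le_of_lt hε) (norm_nonneg _)
  have hone : (fun _ => (1 : ℝ)) =O[𝓝[>] 0] fun ε => 1 + ε * ‖S ε‖ :=
    IsBigO.of_bound 1 (hpos.mono fun ε h => by
      rw [norm_one, one_mul, Real.norm_of_nonneg (show 0 ≤ 1 + ε * ‖S ε‖ by linarith)]
      linarith)
  have hεS : (fun ε => ε * ‖S ε‖) =O[𝓝[>] 0] fun ε => 1 + ε * ‖S ε‖ :=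
    IsBigO.of_bound 1 (hpos.mono fun ε h => by
      rw [one_mul, Real.norm_of_nonneg h, Real.norm_of_nonneg (show 0 ≤ 1 + ε * ‖S ε‖ by linarith)]
      linarith)
  have hhidden : ∀ j ≤ m, (fun ε => v ε j) =O[𝓝[>] 0] fun ε => 1 + ε * ‖S ε‖ := by
    intro j hj
    induction j with
    | zero => exact hin.trans hone
    | succ j ih =>
      have hap := isBigO_apical Wa (hQ (j + 1) hj) (hvS (j + 2) (by omega)) (hvS (j + 1) (by omega))
      have hεap : (fun ε => ε • _) =O[𝓝[>] 0] fun ε => 1 + ε * ‖S ε‖ :=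
        ((isBigO_refl _ _).smul hap).trans (by simpa only [smul_eq_mul] using hεS)
      exact (((ih (by omega)).const_mulVec (Wb j)).add hεap).congr'
        (by filter_upwards [hrec j hj] with ε h using h.symm) EventuallyEq.rfl
  have hall : ∀ j ≤ m + 1, (fun ε => v ε j) =O[𝓝[>] 0] fun ε => 1 + ε * ‖S ε‖ := fun j hj =>
    (Nat.le_succ_iff.1 hj).elim (hhidden j) fun h => h ▸ hout.trans hone
  have hS : S =O[𝓝[>] 0] fun ε => 1 + ε * ‖S ε‖ :=
    IsBigO.fun_sum fun j hj => (hall j (Nat.lt_succ_iff.1 (Finset.mem_range.1 hj))).norm_left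
  have hS1 := isBigO_one_of_isBigO_one_add_mul_norm
    (tendsto_nhdsWithin_of_tendsto_nhds tendsto_id) hS
  exact fun j hj => (hvS j hj).trans hS1.norm_left

section ResidualRecursion

variable {l₀ : ℕ} {e : ℝ → (j : ℕ) → Fin (d j) → ℝ}

/-- `k` counts sweeps through the layer equations from `e^{(l₀)} = 0`; each sweep gains a
factor `ε`. -/
theorem isBigO_pow_min_of_eq_latentMap
    (hQ : ∀ l ≤ m, ∀ i j, (fun ε => Q ε l i j) =O[𝓝[>] 0] fun _ => (1 : ℝ))
    (hrec : ∀ l, l₀ ≤ l → l < m → ∀ᶠ ε in 𝓝[>] 0, e ε (l + 1) = latentMap Wb Wa (Q ε) ε l (e ε))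
    (hbot : ∀ᶠ ε in 𝓝[>] 0, e ε l₀ = 0)
    (hbdd : ∀ j, l₀ ≤ j → j ≤ m + 1 → (fun ε => e ε j) =O[𝓝[>] 0] fun _ => (1 : ℝ)) (k : ℕ) :
    ∀ j s, l₀ ≤ j → j + s = m + 1 → (fun ε => e ε j) =O[𝓝[>] 0] fun ε => ε ^ min k s := by
  induction k with
  | zero => intro j s hj hjs; simpa using hbdd j hj (by omega)
  | succ k ih =>
    intro j s hj hjs
    induction j, hj using Nat.le_induction generalizing s with
    | base =>
      exact (isBigO_zero _ _).congr' (hbot.mono fun _ h => h.symm) EventuallyEq.rfl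
    | succ j hj ihj =>
      rcases s with _ | s
      · simpa using hbdd (j + 1) (by omega) (by omega)
      have hWb : (fun ε => Wb j *ᵥ e ε j) =O[𝓝[>] 0] fun ε => ε ^ min (k + 1) (s + 1) :=
        ((ihj (s + 2) (by omega)).const_mulVec _).trans
          ((isBigO_pow_pow_of_le (by omega)).mono nhdsWithin_le_nhds)
      have hap := isBigO_apical Wa (hQ (j + 1) (by omega)) (ih (j + 2) s (by omega) (by omega))
        ((ih (j + 1) (s + 1) (by omega) (by omega)).trans
          ((isBigO_pow_pow_of_le (by omega)).mono nhdsWithin_le_nhds))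
      refine (hWb.add (hap.id_smul_pow_succ.congr_right fun ε => ?_)).congr'
        (by filter_upwards [hrec j hj (by omega)] with ε h using h.symm) EventuallyEq.rfl
      rw [Nat.succ_min_succ]

theorem isBigO_sub_chain_of_eq_latentMap
    (hQ : ∀ l ≤ m, ∀ i j, (fun ε => Q ε l i j) =O[𝓝[>] 0] fun _ => (1 : ℝ))
    (hrec : ∀ l, l₀ ≤ l → l < m → ∀ᶠ ε in 𝓝[>] 0, e ε (l + 1) = latentMap Wb Wa (Q ε) ε l (e ε))
    (hbot : ∀ᶠ ε in 𝓝[>] 0, e ε l₀ = 0)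
    (hbdd : ∀ j, l₀ ≤ j → j ≤ m + 1 → (fun ε => e ε j) =O[𝓝[>] 0] fun _ => (1 : ℝ))
    {chain : (j : ℕ) → Matrix (Fin (d j)) (Fin (d (m + 1))) ℝ} (hchainTop : chain (m + 1) = 1)
    (hchain : ∀ j, j ≤ m → chain j = (Wa j)ᵀ * chain (j + 1)) (s : ℕ) :
    ∀ j, l₀ < j → j + s = m + 1 →
      (fun ε => e ε j - ε ^ s • (chain j *ᵥ e ε (m + 1))) =O[𝓝[>] 0] fun ε => ε ^ (s + 1) := by
  have hpow : ∀ j s, l₀ ≤ j → j + s = m + 1 → (fun ε => e ε j) =O[𝓝[>] 0] fun ε => ε ^ s :=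
    fun j s hj hjs => by
      simpa using isBigO_pow_min_of_eq_latentMap Wb Wa hQ hrec hbot hbdd s j s hj hjs
  induction s with
  | zero =>
    intro j _ hj
    obtain rfl : j = m + 1 := by omega
    simpa [hchainTop] using isBigO_zero (E' := Fin (d (m + 1)) → ℝ) (fun ε : ℝ => ε) (𝓝[>] 0)
  | succ s ih =>
    intro j hj hjs
    obtain ⟨l, rfl⟩ : ∃ l, j = l + 1 := ⟨j - 1, by omega⟩
    have hsplit : ∀ᶠ ε in 𝓝[>] 0, Wb l *ᵥ e ε l + ε • ((Wa (l + 1))ᵀ *ᵥ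
        (e ε (l + 2) - ε ^ s • (chain (l + 2) *ᵥ e ε (m + 1)))
          - (Q ε (l + 1))ᵀ *ᵥ (Q ε (l + 1) *ᵥ e ε (l + 1)))
        = e ε (l + 1) - ε ^ (s + 1) • (chain (l + 1) *ᵥ e ε (m + 1)) := by
      filter_upwards [hrec l (by omega) (by omega)] with ε h
      conv_rhs => rw [h, latentMap_apply, hchain (l + 1) (by omega), ← mulVec_mulVec]
      simp only [mulVec_sub, mulVec_smul]
      module
    have hap := isBigO_apical Wa (hQ (l + 1) (by omega)) (ih (l + 2) (by omega) (by omega))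
      (hpow (l + 1) (s + 1) (by omega) (by omega))
    exact (((hpow l (s + 2) (by omega) (by omega)).const_mulVec _).add
      hap.id_smul_pow_succ).congr' hsplit EventuallyEq.rfl

end ResidualRecursion

theorem sub_sum_smul_eq_latentMap {Q : (l : ℕ) → Matrix (Fin (kk l)) (Fin (d l)) ℝ} {ε : ℝ}
    {T l : ℕ} {z : ℕ → (j : ℕ) → Fin (d j) → ℝ} (c : Fin T → ℝ)
    (hz : ∀ t ≤ T, z t (l + 1) = latentMap Wb Wa Q ε l (z t)) :
    (z T - ∑ t : Fin T, c t • z t) (l + 1) =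
      latentMap Wb Wa Q ε l (z T - ∑ t : Fin T, c t • z t) := by
  simp only [map_sub, map_sum, map_smul, Pi.sub_apply, Finset.sum_apply, Pi.smul_apply,
    hz T le_rfl, fun t : Fin T => hz t t.2.le]

theorem latentMap_sub_of_apical_eq {Q : (l : ℕ) → Matrix (Fin (kk l)) (Fin (d l)) ℝ} {ε : ℝ}
    {l : ℕ} {z w : (j : ℕ) → Fin (d j) → ℝ} (hl : z l = w l)
    (hw : (Q (l + 1))ᵀ *ᵥ (Q (l + 1) *ᵥ w (l + 1)) = (Wa (l + 1))ᵀ *ᵥ w (l + 2)) :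
    latentMap Wb Wa Q ε l (z - w) =
      ε • ((Wa (l + 1))ᵀ *ᵥ z (l + 2) - (Q (l + 1))ᵀ *ᵥ (Q (l + 1) *ᵥ z (l + 1))) := by
  simp only [latentMap_apply, Pi.sub_apply, hl, sub_self, mulVec_zero, mulVec_sub, hw]
  module

theorem isBigO_smul_apical_sub_chain
    (hQ : ∀ l ≤ m, ∀ i j, (fun ε => Q ε l i j) =O[𝓝[>] 0] fun _ => (1 : ℝ))
    {T l₀ : ℕ} (hl₀ : l₀ < m) {z : ℝ → ℕ → (j : ℕ) → Fin (d j) → ℝ} {c : ℝ → Fin T → ℝ}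
    (hz : ∀ t ≤ T, ∀ j ≤ m + 1, (fun ε => z ε t j) =O[𝓝[>] 0] fun _ => (1 : ℝ))
    (hc : c =O[𝓝[>] 0] fun _ => (1 : ℝ))
    (hzrec : ∀ᶠ ε in 𝓝[>] 0, ∀ t ≤ T, ∀ l < m,
      z ε t (l + 1) = latentMap Wb Wa (Q ε) ε l (z ε t))
    (hbot : ∀ᶠ ε in 𝓝[>] 0, z ε T l₀ = ∑ t : Fin T, c ε t • z ε t l₀)
    (hlearn : ∀ᶠ ε in 𝓝[>] 0,
      (Q ε (l₀ + 1))ᵀ *ᵥ (Q ε (l₀ + 1) *ᵥ ∑ t : Fin T, c ε t • z ε t (l₀ + 1))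
        = (Wa (l₀ + 1))ᵀ *ᵥ ∑ t : Fin T, c ε t • z ε t (l₀ + 2))
    {chain : (j : ℕ) → Matrix (Fin (d j)) (Fin (d (m + 1))) ℝ} (hchainTop : chain (m + 1) = 1)
    (hchain : ∀ j, j ≤ m → chain j = (Wa j)ᵀ * chain (j + 1)) :
    (fun ε => ε • ((Wa (l₀ + 1))ᵀ *ᵥ z ε T (l₀ + 2)
        - (Q ε (l₀ + 1))ᵀ *ᵥ (Q ε (l₀ + 1) *ᵥ z ε T (l₀ + 1)))
      - ε ^ (m - l₀) • (chain (l₀ + 1) *ᵥ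
          (z ε T (m + 1) - ∑ t : Fin T, c ε t • z ε t (m + 1))))
      =O[𝓝[>] 0] fun ε => ε ^ (m - l₀ + 1) := by
  set e : ℝ → (j : ℕ) → Fin (d j) → ℝ := fun ε => z ε T - ∑ t : Fin T, c ε t • z ε t
  have he : ∀ ε j, e ε j = z ε T j - ∑ t : Fin T, c ε t • z ε t j := fun ε j => by
    simp only [e, Pi.sub_apply, Finset.sum_apply, Pi.smul_apply]
  have hrec : ∀ l < m, ∀ᶠ ε in 𝓝[>] 0, e ε (l + 1) = latentMap Wb Wa (Q ε) ε l (e ε) :=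
    fun l hl => hzrec.mono fun ε h => sub_sum_smul_eq_latentMap Wb Wa (c ε) fun t ht => h t ht l hl
  have hbdd : ∀ j ≤ m + 1, (fun ε => e ε j) =O[𝓝[>] 0] fun _ => (1 : ℝ) := fun j hj =>
    ((hz T le_rfl j hj).sub ((IsBigO.fun_sum fun t _ => (isBigO_pi.1 hc t).smul
      (hz t t.2.le j hj)).congr_right fun _ => one_smul ℝ 1)).congr_left fun ε => (he ε j).symm
  have hexp := isBigO_sub_chain_of_eq_latentMap Wb Wa hQ (fun l _ hl => hrec l hl)
    (hbot.mono fun ε h => by rw [he, h, sub_self]) (fun j _ hj => hbdd j hj) hchainTop hchain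
    (m - l₀) (l₀ + 1) (by omega) (by omega)
  refine hexp.congr' ?_ EventuallyEq.rfl
  filter_upwards [hrec l₀ hl₀, hbot, hlearn] with ε h hb hl
  rw [h, he ε (m + 1)]
  show latentMap Wb Wa (Q ε) ε l₀ (z ε T - ∑ t : Fin T, c ε t • z ε t) - _ = _
  rw [latentMap_sub_of_apical_eq Wb Wa (by simpa only [Finset.sum_apply, Pi.smul_apply] using hb)
    (by simpa only [Finset.sum_apply, Pi.smul_apply] using hl)]

end BioCCPC

theorem bioccpc_basal_update_encodes_error_general
    (m : ℕ) (d kk : ℕ → ℕ)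
    (Wb Wa : (l : ℕ) → Matrix (Fin (d (l + 1))) (Fin (d l)) ℝ)
    (T : ℕ) -- samples `0, …, T - 1` are the training set; sample `T` is the new datapoint
    (x : ℕ → Fin (d 0) → ℝ) (y : ℕ → Fin (d (m + 1)) → ℝ)
    (ε₀ : ℝ) (hε₀ : 0 < ε₀)
    -- interneuron weights, bounded as `ε → 0⁺`
    (Q : ℝ → (l : ℕ) → Matrix (Fin (kk l)) (Fin (d l)) ℝ)
    (CQ : ℝ)
    (hQbound : ∀ ε ∈ Set.Ioo (0 : ℝ) ε₀, ∀ l, l ≤ m → ∀ i j, |Q ε l i j| ≤ CQ)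
    -- conductances with `ε = g_a / g_b`
    (ga gb : ℝ → ℝ)
    (hg : ∀ ε ∈ Set.Ioo (0 : ℝ) ε₀, 0 < ga ε ∧ 0 < gb ε ∧ ε = ga ε / gb ε)
    -- equilibrium latents for each sample
    (z : ℝ → ℕ → (l : ℕ) → Fin (d l) → ℝ)
    (hboundary : ∀ ε ∈ Set.Ioo (0 : ℝ) ε₀, ∀ t, t ≤ T →
      z ε t 0 = x t ∧ z ε t (m + 1) = y t)
    (hequil : ∀ ε ∈ Set.Ioo (0 : ℝ) ε₀, ∀ t, t ≤ T → ∀ l, l < m →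
      gb ε • (Wb l *ᵥ z ε t l) + ga ε • ((Wa (l + 1))ᵀ *ᵥ z ε t (l + 2))
        - gb ε • z ε t (l + 1)
        - ga ε • ((Q ε (l + 1))ᵀ *ᵥ (Q ε (l + 1) *ᵥ z ε t (l + 1))) = 0)
    -- data matrices collecting the first `T` samples
    (Zmat : ℝ → (l : ℕ) → Matrix (Fin (d l)) (Fin T) ℝ)
    (hZmat : ∀ ε l, Zmat ε l = Matrix.of fun i (t : Fin T) => z ε (t : ℕ) l i)
    (Ymat : Matrix (Fin (d (m + 1))) (Fin T) ℝ)
    (hYmat : Ymat = Matrix.of fun i (t : Fin T) => y (t : ℕ) i)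
    -- the hidden layer under consideration is `l = l₀ + 1`, with `1 ≤ l ≤ m = n - 1`
    (l₀ : ℕ) (hl₀ : l₀ < m)
    -- the previous-layer Gram matrix is invertible with inverse bounded as `ε → 0⁺`
    (CG : ℝ)
    (hGram : ∀ ε ∈ Set.Ioo (0 : ℝ) ε₀,
      IsUnit (Zmat ε l₀ * (Zmat ε l₀)ᵀ).det ∧
      ∀ i j, |(Zmat ε l₀ * (Zmat ε l₀)ᵀ)⁻¹ i j| ≤ CG)
    -- the learning-rule equilibrium over the first `T` samples
    (hlearn : ∀ ε ∈ Set.Ioo (0 : ℝ) ε₀,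
      (Q ε (l₀ + 1))ᵀ * Q ε (l₀ + 1) * Zmat ε (l₀ + 1) * (Zmat ε l₀)ᵀ
        = (Wa (l₀ + 1))ᵀ * Zmat ε (l₀ + 2) * (Zmat ε l₀)ᵀ)
    -- the chain of transposed feedback weights `chain j = W_a^{(j)ᵀ} ⋯ W_a^{(m)ᵀ}`
    (chain : (j : ℕ) → Matrix (Fin (d j)) (Fin (d (m + 1))) ℝ)
    (hchainTop : chain (m + 1) = 1)
    (hchain : ∀ j, j ≤ m → chain j = (Wa j)ᵀ * chain (j + 1))
    -- the optimal linear prediction of the new output from the previous-layer activity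
    (ytil : ℝ → Fin (d (m + 1)) → ℝ)
    (hytil : ∀ ε, ytil ε = Ymat *ᵥ ((Zmat ε l₀)ᵀ *ᵥ
      ((Zmat ε l₀ * (Zmat ε l₀)ᵀ)⁻¹ *ᵥ z ε T l₀)))
    -- the basal weight update induced by the new sample
    (δWb : ℝ → Matrix (Fin (d (l₀ + 1))) (Fin (d l₀)) ℝ)
    (hδWb : ∀ ε, δWb ε = ε • vecMulVec
      ((Wa (l₀ + 1))ᵀ *ᵥ z ε T (l₀ + 2)
        - (Q ε (l₀ + 1))ᵀ *ᵥ (Q ε (l₀ + 1) *ᵥ z ε T (l₀ + 1)))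
      (z ε T l₀)) :
    ∃ K ε₁ : ℝ, 0 < K ∧ 0 < ε₁ ∧
      ∀ ε ∈ Set.Ioo (0 : ℝ) (min ε₀ ε₁), ∀ i j,
        |δWb ε i j
          - ε ^ (m - l₀) *
            vecMulVec (chain (l₀ + 1) *ᵥ (y T - ytil ε)) (z ε T l₀) i j|
          ≤ K * ε ^ (m - l₀ + 1) := by
  have hε : ∀ᶠ ε in 𝓝[>] (0 : ℝ), ε ∈ Set.Ioo 0 ε₀ := Ioo_mem_nhdsGT hε₀
  have hQ : ∀ l ≤ m, ∀ i j, (fun ε => Q ε l i j) =O[𝓝[>] 0] fun _ => (1 : ℝ) := fun l hl i j =>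
    IsBigO.of_bound CQ (hε.mono fun ε hε => by simpa using hQbound ε hε l hl i j)
  have hzrec : ∀ ε ∈ Set.Ioo 0 ε₀, ∀ t ≤ T, ∀ l < m,
      z ε t (l + 1) = BioCCPC.latentMap Wb Wa (Q ε) ε l (z ε t) := fun ε hε t ht l hl =>
    BioCCPC.eq_latentMap_of_equilibrium Wb Wa (hg ε hε).2.1 (hg ε hε).2.2 (hequil ε hε t ht l hl)
  have hz : ∀ t ≤ T, ∀ j ≤ m + 1, (fun ε => z ε t j) =O[𝓝[>] 0] fun _ => (1 : ℝ) := fun t ht =>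
    BioCCPC.isBigO_one_of_eq_latentMap Wb Wa hQ
      ((isBigO_const_one ℝ (x t) _).congr' (hε.mono fun ε hε => (hboundary ε hε t ht).1.symm)
        EventuallyEq.rfl)
      ((isBigO_const_one ℝ (y t) _).congr' (hε.mono fun ε hε => (hboundary ε hε t ht).2.symm)
        EventuallyEq.rfl)
      fun l hl => hε.mono fun ε hε => hzrec ε hε t ht l hl
  -- `P ε` holds the least-squares coefficients of the new sample on the training samples
  set P : ℝ → Fin T → ℝ := fun ε => (Zmat ε l₀)ᵀ *ᵥ ((Zmat ε l₀ * (Zmat ε l₀)ᵀ)⁻¹ *ᵥ z ε T l₀)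
  have hZP : ∀ ε j, Zmat ε j *ᵥ P ε = ∑ t : Fin T, P ε t • z ε t j := fun ε j => by
    rw [hZmat, of_mulVec_eq_sum]
  have hP : P =O[𝓝[>] 0] fun _ => (1 : ℝ) := by
    have hG : ∀ i j, (fun ε => (Zmat ε l₀ * (Zmat ε l₀)ᵀ)⁻¹ i j) =O[𝓝[>] 0] fun _ => (1 : ℝ) :=
      fun i j => IsBigO.of_bound CG (hε.mono fun ε hε => by simpa using (hGram ε hε).2 i j)
    have hZ : ∀ t i, (fun ε => (Zmat ε l₀)ᵀ t i) =O[𝓝[>] 0] fun _ => (1 : ℝ) := fun t i => by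
      simpa [hZmat] using isBigO_pi.1 (hz t t.2.le l₀ (by omega)) i
    exact (IsBigO.mulVec hZ (IsBigO.mulVec hG (hz T le_rfl l₀ (by omega)))).congr_right
      fun _ => by norm_num
  have hmain := BioCCPC.isBigO_smul_apical_sub_chain Wb Wa hQ hl₀ hz hP (hε.mono hzrec)
    (hε.mono fun ε hε => by
      rw [← hZP, mulVec_mulVec, mulVec_mulVec, mul_nonsing_inv _ (hGram ε hε).1, one_mulVec])
    (hε.mono fun ε hε => by
      rw [← hZP, ← hZP]
      simpa only [← mulVec_mulVec] using
        congrArg (· *ᵥ ((Zmat ε l₀ * (Zmat ε l₀)ᵀ)⁻¹ *ᵥ z ε T l₀)) (hlearn ε hε))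
    hchainTop hchain
  obtain ⟨K, ε₁, hK, hε₁, hbound⟩ := exists_forall_Ioo_abs_le_of_isBigO
    ((hmain.outerProduct (hz T le_rfl l₀ (by omega))).congr_right fun _ => mul_one _)
  refine ⟨K, ε₁, hK, hε₁, fun ε hε i j => ?_⟩
  have hεε₀ : ε ∈ Set.Ioo 0 ε₀ := ⟨hε.1, hε.2.trans_le (min_le_left _ _)⟩
  have hyerr : y T - ytil ε = z ε T (m + 1) - ∑ t : Fin T, P ε t • z ε t (m + 1) := by
    rw [hytil, hYmat, of_mulVec_eq_sum, (hboundary ε hεε₀ T le_rfl).2]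
    simp only [fun t : Fin T => (hboundary ε hεε₀ t t.2.le).2]
    rfl
  simpa [hδWb, vecMulVec_apply, hyerr, sub_mul, mul_assoc] using
    hbound ε ⟨hε.1, hε.2.trans_le (min_le_right _ _)⟩ i j

/-- **The basal weight update implicitly encodes the backpropagated prediction error
(Proposition 1).**  In the `(n+1)`-layer linear BioCCPC network (`n = m + 1`) with
`c^{(l)} = 0`, fixed weights `W_a, W_b`, interneuron weights `Q^{(l)}(ε)` bounded as
`ε → 0⁺`, equilibrium latents `z_t^{(l)}(ε)` for samples `t = 0, …, T` (sample `T` being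
new), invertible layer-`l₀` Gram matrix with bounded inverse, and the learning-rule
equilibrium `Q^ᵀQ Z^{(l₀+1)} Z^{(l₀)ᵀ} = W_a^ᵀ Z^{(l₀+2)} Z^{(l₀)ᵀ}` over the first `T`
samples, the basal update `δW_b ∝ ε (W_aᵀ z^{(l₀+2)} − QᵀQ z^{(l₀+1)}) z^{(l₀)ᵀ}` for the
new sample satisfies
`δW_b = ε^{n-l} [W_a^{(l)ᵀ}⋯W_a^{(n-1)ᵀ} (y − ỹ)] z^{(l-1)ᵀ} + O(ε^{n-l+1})`
(with `l = l₀ + 1`), where `ỹ` is the optimal linear prediction of the new output from the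
previous-layer activity. -/
theorem bioccpc_basal_update_encodes_error
    (m : ℕ) (hm : 1 ≤ m) (d kk : ℕ → ℕ)
    (Wb Wa : (l : ℕ) → Matrix (Fin (d (l + 1))) (Fin (d l)) ℝ)
    (T : ℕ) -- samples `0, …, T - 1` are the training set; sample `T` is the new datapoint
    (x : ℕ → Fin (d 0) → ℝ) (y : ℕ → Fin (d (m + 1)) → ℝ)
    (ε₀ : ℝ) (hε₀ : 0 < ε₀)
    -- interneuron weights, bounded as `ε → 0⁺`
    (Q : ℝ → (l : ℕ) → Matrix (Fin (kk l)) (Fin (d l)) ℝ)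
    (CQ : ℝ)
    (hQbound : ∀ ε ∈ Set.Ioo (0 : ℝ) ε₀, ∀ l, l ≤ m → ∀ i j, |Q ε l i j| ≤ CQ)
    -- conductances with `ε = g_a / g_b`
    (ga gb : ℝ → ℝ)
    (hg : ∀ ε ∈ Set.Ioo (0 : ℝ) ε₀, 0 < ga ε ∧ 0 < gb ε ∧ ε = ga ε / gb ε)
    -- equilibrium latents for each sample
    (z : ℝ → ℕ → (l : ℕ) → Fin (d l) → ℝ)
    (hboundary : ∀ ε ∈ Set.Ioo (0 : ℝ) ε₀, ∀ t, t ≤ T →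
      z ε t 0 = x t ∧ z ε t (m + 1) = y t)
    (hequil : ∀ ε ∈ Set.Ioo (0 : ℝ) ε₀, ∀ t, t ≤ T → ∀ l, l < m →
      gb ε • (Wb l *ᵥ z ε t l) + ga ε • ((Wa (l + 1))ᵀ *ᵥ z ε t (l + 2))
        - gb ε • z ε t (l + 1)
        - ga ε • ((Q ε (l + 1))ᵀ *ᵥ (Q ε (l + 1) *ᵥ z ε t (l + 1))) = 0)
    -- data matrices collecting the first `T` samples
    (Zmat : ℝ → (l : ℕ) → Matrix (Fin (d l)) (Fin T) ℝ)
    (hZmat : ∀ ε l, Zmat ε l = Matrix.of fun i (t : Fin T) => z ε (t : ℕ) l i)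
    (Ymat : Matrix (Fin (d (m + 1))) (Fin T) ℝ)
    (hYmat : Ymat = Matrix.of fun i (t : Fin T) => y (t : ℕ) i)
    -- the hidden layer under consideration is `l = l₀ + 1`, with `1 ≤ l ≤ m = n - 1`
    (l₀ : ℕ) (hl₀ : l₀ < m)
    -- the previous-layer Gram matrix is invertible with inverse bounded as `ε → 0⁺`
    (CG : ℝ)
    (hGram : ∀ ε ∈ Set.Ioo (0 : ℝ) ε₀,
      IsUnit (Zmat ε l₀ * (Zmat ε l₀)ᵀ).det ∧
      ∀ i j, |(Zmat ε l₀ * (Zmat ε l₀)ᵀ)⁻¹ i j| ≤ CG)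
    -- the learning-rule equilibrium over the first `T` samples
    (hlearn : ∀ ε ∈ Set.Ioo (0 : ℝ) ε₀,
      (Q ε (l₀ + 1))ᵀ * Q ε (l₀ + 1) * Zmat ε (l₀ + 1) * (Zmat ε l₀)ᵀ
        = (Wa (l₀ + 1))ᵀ * Zmat ε (l₀ + 2) * (Zmat ε l₀)ᵀ)
    -- the chain of transposed feedback weights `chain j = W_a^{(j)ᵀ} ⋯ W_a^{(m)ᵀ}`
    (chain : (j : ℕ) → Matrix (Fin (d j)) (Fin (d (m + 1))) ℝ)
    (hchainTop : chain (m + 1) = 1)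
    (hchain : ∀ j, j ≤ m → chain j = (Wa j)ᵀ * chain (j + 1))
    -- the optimal linear prediction of the new output from the previous-layer activity
    (ytil : ℝ → Fin (d (m + 1)) → ℝ)
    (hytil : ∀ ε, ytil ε = Ymat *ᵥ ((Zmat ε l₀)ᵀ *ᵥ
      ((Zmat ε l₀ * (Zmat ε l₀)ᵀ)⁻¹ *ᵥ z ε T l₀)))
    -- the basal weight update induced by the new sample
    (δWb : ℝ → Matrix (Fin (d (l₀ + 1))) (Fin (d l₀)) ℝ)
    (hδWb : ∀ ε, δWb ε = ε • vecMulVec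
      ((Wa (l₀ + 1))ᵀ *ᵥ z ε T (l₀ + 2)
        - (Q ε (l₀ + 1))ᵀ *ᵥ (Q ε (l₀ + 1) *ᵥ z ε T (l₀ + 1)))
      (z ε T l₀)) :
    ∃ K ε₁ : ℝ, 0 < K ∧ 0 < ε₁ ∧
      ∀ ε ∈ Set.Ioo (0 : ℝ) (min ε₀ ε₁), ∀ i j,
        |δWb ε i j
          - ε ^ (m - l₀) *
            vecMulVec (chain (l₀ + 1) *ᵥ (y T - ytil ε)) (z ε T l₀) i j|
          ≤ K * ε ^ (m - l₀ + 1) :=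
  bioccpc_basal_update_encodes_error_general m d kk Wb Wa T x y ε₀ hε₀ Q CQ hQbound ga gb hg z
    hboundary hequil Zmat hZmat Ymat hYmat l₀ hl₀ CG hGram hlearn chain hchainTop hchain ytil hytil
    δWb hδWb
end
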